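/- arXiv:1306.2423 — 7 statements merged into one kernel-verified Lean document; each statement's English description precedes it below -/
import Mathlib

section
/- For an n-by-n complex matrix A and an m-by-m complex matrix B, the numerical radius of the Kronecker product satisfies w(A ⊗ B) ≤ min{‖A‖·w(B), ‖B‖·w(A)}, where ‖·‖ is the operator norm. -/
open scoped Kronecker InnerProductSpace

/-- The operator norm (spectral norm) of a complex matrix, viewed as an operator
on Euclidean space. -/
noncomputable def opNorm {n : Type*} [Fintype n] [DecidableEq n] (A : Matrix n n ℂ) : ℝ :=
  ‖Matrix.toEuclideanCLM (𝕜 := ℂ) A‖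

/-- The numerical radius of a complex matrix: the supremum of `|⟨Ax, x⟩|` over
unit vectors `x`. -/
noncomputable def numRadius {n : Type*} [Fintype n] [DecidableEq n] (A : Matrix n n ℂ) : ℝ :=
  sSup {r : ℝ | ∃ x : EuclideanSpace ℂ n, ‖x‖ = 1 ∧
    r = ‖⟪x, Matrix.toEuclideanLin A x⟫_ℂ‖}

/-!
If `U` is unitary, diagonalize it as `U = W D W*`; then `U ⊗ B` is unitarily similar to `D ⊗ B`,
which after reordering the coordinates is block diagonal with blocks `μₖ B`, `|μₖ| = 1`, so
`w(U ⊗ B) ≤ w(B)`. A contraction `A` is the average of two unitaries: from a singular value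
decomposition `A = Q Σ P*` take `Q (Σ ± i √(1 - Σ²)) P*`. Subadditivity of `w` then gives
`w(A ⊗ B) ≤ w(B)` for contractions, and scaling gives `w(A ⊗ B) ≤ ‖A‖ w(B)`. The other bound
follows by exchanging the tensor factors, which is a permutation similarity.
-/

open Matrix

section NumericalRadius

variable {ι κ : Type*} [Fintype ι] [DecidableEq ι] [Fintype κ] [DecidableEq κ]

lemma norm_toEuclideanLin_le_opNorm (A : Matrix ι ι ℂ) (x : EuclideanSpace ℂ ι) :
    ‖toEuclideanLin A x‖ ≤ opNorm A * ‖x‖ :=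
  (toEuclideanCLM (𝕜 := ℂ) A).le_opNorm x

lemma opNorm_smul (c : ℂ) (A : Matrix ι ι ℂ) : opNorm (c • A) = ‖c‖ * opNorm A := by
  rw [opNorm, map_smul, norm_smul, opNorm]

lemma bddAbove_numRadius (A : Matrix ι ι ℂ) :
    BddAbove {r : ℝ | ∃ x : EuclideanSpace ℂ ι, ‖x‖ = 1 ∧ r = ‖⟪x, toEuclideanLin A x⟫_ℂ‖} := by
  refine ⟨opNorm A, ?_⟩
  rintro _ ⟨x, hx, rfl⟩
  calc ‖⟪x, toEuclideanLin A x⟫_ℂ‖ ≤ ‖x‖ * ‖toEuclideanLin A x‖ := norm_inner_le_norm _ _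
    _ ≤ ‖x‖ * (opNorm A * ‖x‖) := by gcongr; exact norm_toEuclideanLin_le_opNorm A x
    _ = opNorm A := by rw [hx]; ring

lemma numRadius_nonneg (A : Matrix ι ι ℂ) : 0 ≤ numRadius A :=
  Real.sSup_nonneg fun _ ⟨_, _, hr⟩ => hr ▸ norm_nonneg _

lemma numRadius_le {A : Matrix ι ι ℂ} {c : ℝ} (hc : 0 ≤ c)
    (h : ∀ x : EuclideanSpace ℂ ι, ‖x‖ = 1 → ‖⟪x, toEuclideanLin A x⟫_ℂ‖ ≤ c) :
    numRadius A ≤ c :=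
  Real.sSup_le (fun _ ⟨x, hx, hr⟩ => hr ▸ h x hx) hc

lemma norm_inner_le_numRadius {A : Matrix ι ι ℂ} {x : EuclideanSpace ℂ ι} (hx : ‖x‖ = 1) :
    ‖⟪x, toEuclideanLin A x⟫_ℂ‖ ≤ numRadius A :=
  le_csSup (bddAbove_numRadius A) ⟨x, hx, rfl⟩

lemma norm_inner_le_numRadius_mul_sq (A : Matrix ι ι ℂ) (x : EuclideanSpace ℂ ι) :
    ‖⟪x, toEuclideanLin A x⟫_ℂ‖ ≤ numRadius A * ‖x‖ ^ 2 := by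
  rcases eq_or_ne x 0 with rfl | hx
  · simp
  have hunit : ‖(‖x‖⁻¹ : ℂ) • x‖ = 1 := by
    rw [norm_smul, norm_inv, Complex.norm_real, norm_norm,
      inv_mul_cancel₀ (norm_ne_zero_iff.mpr hx)]
  have h := norm_inner_le_numRadius (A := A) hunit
  rw [map_smul, inner_smul_left, inner_smul_right, norm_mul, norm_mul, Complex.norm_conj,
    norm_inv, Complex.norm_real, norm_norm, ← mul_assoc, ← sq] at h
  rwa [inv_pow, inv_mul_le_iff₀ (by positivity), mul_comm] at h

lemma numRadius_add_le (A B : Matrix ι ι ℂ) : numRadius (A + B) ≤ numRadius A + numRadius B := by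
  refine numRadius_le (add_nonneg (numRadius_nonneg A) (numRadius_nonneg B)) fun x hx => ?_
  rw [map_add, LinearMap.add_apply, inner_add_right]
  exact (norm_add_le _ _).trans
    (add_le_add (norm_inner_le_numRadius hx) (norm_inner_le_numRadius hx))

lemma numRadius_smul_le (c : ℂ) (A : Matrix ι ι ℂ) : numRadius (c • A) ≤ ‖c‖ * numRadius A := by
  refine numRadius_le (by positivity [numRadius_nonneg A]) fun x hx => ?_
  rw [map_smul, LinearMap.smul_apply, inner_smul_right, norm_mul]
  exact mul_le_mul_of_nonneg_left (norm_inner_le_numRadius hx) (norm_nonneg c)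

lemma numRadius_le_of_inner_eq {A : Matrix ι ι ℂ} {B : Matrix κ κ ℂ}
    (u : EuclideanSpace ℂ κ → EuclideanSpace ℂ ι) (hu : ∀ x, ‖u x‖ = ‖x‖)
    (h : ∀ x, ⟪x, toEuclideanLin B x⟫_ℂ = ⟪u x, toEuclideanLin A (u x)⟫_ℂ) :
    numRadius B ≤ numRadius A :=
  numRadius_le (numRadius_nonneg A) fun x hx =>
    h x ▸ norm_inner_le_numRadius ((hu x).trans hx)

lemma numRadius_mul_mul_star_le {W : Matrix ι ι ℂ} (hW : W ∈ unitaryGroup ι ℂ)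
    (A : Matrix ι ι ℂ) : numRadius (W * A * star W) ≤ numRadius A := by
  have hw : toEuclideanCLM (𝕜 := ℂ) (star W) ∈ unitary _ :=
    Unitary.map_mem (toEuclideanCLM (𝕜 := ℂ) (n := ι)) (Unitary.star_mem hW)
  refine numRadius_le_of_inner_eq (toEuclideanCLM (𝕜 := ℂ) (star W))
    (ContinuousLinearMap.norm_map_of_mem_unitary hw) fun x => ?_
  change ⟪x, toEuclideanCLM (𝕜 := ℂ) (W * A * star W) x⟫_ℂ =
    ⟪_, toEuclideanCLM (𝕜 := ℂ) A (toEuclideanCLM (𝕜 := ℂ) (star W) x)⟫_ℂ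
  rw [map_mul, map_mul, map_star, ContinuousLinearMap.star_eq_adjoint, mul_apply_eq_comp,
    mul_apply_eq_comp, ← ContinuousLinearMap.adjoint_inner_left]

lemma numRadius_submatrix_equiv_le (A : Matrix ι ι ℂ) (e : κ ≃ ι) :
    numRadius (A.submatrix e e) ≤ numRadius A := by
  refine numRadius_le_of_inner_eq (LinearIsometryEquiv.piLpCongrLeft 2 ℂ ℂ e)
    (LinearIsometryEquiv.norm_map _) fun x => ?_
  simp only [EuclideanSpace.inner_eq_star_dotProduct, toLpLin_apply, submatrix_mulVec_equiv]
  rw [← dotProduct_comp_equiv_symm]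
  rfl

end NumericalRadius

section BlockDiagonal

def blockComponent {ι o : Type*} (x : EuclideanSpace ℂ (ι × o)) (k : o) : EuclideanSpace ℂ ι :=
  WithLp.toLp 2 fun i => x (i, k)

lemma sum_norm_blockComponent_sq {ι o : Type*} [Fintype ι] [Fintype o]
    (x : EuclideanSpace ℂ (ι × o)) : ∑ k, ‖blockComponent x k‖ ^ 2 = ‖x‖ ^ 2 := by
  simp only [EuclideanSpace.norm_sq_eq, blockComponent, Fintype.sum_prod_type]
  exact Finset.sum_comm

variable {ι o : Type*} [Fintype ι] [DecidableEq ι] [Fintype o] [DecidableEq o]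

lemma inner_toEuclideanLin_blockDiagonal (M : o → Matrix ι ι ℂ) (x : EuclideanSpace ℂ (ι × o)) :
    ⟪x, toEuclideanLin (blockDiagonal M) x⟫_ℂ =
      ∑ k, ⟪blockComponent x k, toEuclideanLin (M k) (blockComponent x k)⟫_ℂ := by
  simp only [EuclideanSpace.inner_eq_star_dotProduct, toLpLin_apply, dotProduct, mulVec,
    Fintype.sum_prod_type, blockDiagonal_apply, blockComponent, ite_mul, zero_mul,
    Finset.sum_ite_eq, Finset.mem_univ, if_true, Pi.star_apply]
  exact Finset.sum_comm

lemma numRadius_blockDiagonal_le (M : o → Matrix ι ι ℂ) {c : ℝ} (hc : 0 ≤ c)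
    (hM : ∀ k, numRadius (M k) ≤ c) : numRadius (blockDiagonal M) ≤ c := by
  refine numRadius_le hc fun x hx => ?_
  rw [inner_toEuclideanLin_blockDiagonal]
  calc ‖∑ k, ⟪blockComponent x k, toEuclideanLin (M k) (blockComponent x k)⟫_ℂ‖
      ≤ ∑ k, numRadius (M k) * ‖blockComponent x k‖ ^ 2 :=
        (norm_sum_le _ _).trans (Finset.sum_le_sum fun k _ => norm_inner_le_numRadius_mul_sq _ _)
    _ ≤ ∑ k, c * ‖blockComponent x k‖ ^ 2 := by gcongr with k; exact hM k
    _ = c := by rw [← Finset.mul_sum, sum_norm_blockComponent_sq, hx, one_pow, mul_one]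

end BlockDiagonal

section Kronecker

variable {ι κ : Type*} [Fintype ι] [DecidableEq ι] [Fintype κ] [DecidableEq κ]

lemma numRadius_kronecker_comm_le (A : Matrix ι ι ℂ) (B : Matrix κ κ ℂ) :
    numRadius (A ⊗ₖ B) ≤ numRadius (B ⊗ₖ A) := by
  have h : A ⊗ₖ B = (B ⊗ₖ A).submatrix (Equiv.prodComm ι κ) (Equiv.prodComm ι κ) := by
    ext ⟨i, a⟩ ⟨j, c⟩
    exact mul_comm _ _
  rw [h]
  exact numRadius_submatrix_equiv_le _ _

lemma numRadius_diagonal_kronecker_le (μ : ι → ℂ) (hμ : ∀ i, ‖μ i‖ ≤ 1) (B : Matrix κ κ ℂ) :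
    numRadius (diagonal μ ⊗ₖ B) ≤ numRadius B := by
  rw [diagonal_kronecker, reindex_apply]
  refine (numRadius_submatrix_equiv_le _ _).trans <|
    numRadius_blockDiagonal_le _ (numRadius_nonneg B) fun i => ?_
  calc numRadius (μ i • B) ≤ ‖μ i‖ * numRadius B := numRadius_smul_le _ _
    _ ≤ numRadius B := mul_le_of_le_one_left (numRadius_nonneg B) (hμ i)

lemma numRadius_mul_diagonal_mul_star_kronecker_le {W : Matrix ι ι ℂ}
    (hW : W ∈ unitaryGroup ι ℂ) (μ : ι → ℂ) (hμ : ∀ i, ‖μ i‖ ≤ 1) (B : Matrix κ κ ℂ) :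
    numRadius ((W * diagonal μ * star W) ⊗ₖ B) ≤ numRadius B := by
  have h : (W * diagonal μ * star W) ⊗ₖ B = (W ⊗ₖ 1) * (diagonal μ ⊗ₖ B) * star (W ⊗ₖ 1) := by
    simp only [star_eq_conjTranspose, conjTranspose_kronecker, conjTranspose_one,
      ← mul_kronecker_mul, one_mul, mul_one]
  rw [h]
  exact (numRadius_mul_mul_star_le (kronecker_mem_unitary hW (one_mem _)) _).trans
    (numRadius_diagonal_kronecker_le μ hμ B)

end Kronecker

section Decompositions

open scoped ComplexStarModule in
theorem LinearMap.exists_orthonormalBasis_eigenvectors_of_isStarNormal {E : Type*}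
    [NormedAddCommGroup E] [InnerProductSpace ℂ E] [FiniteDimensional ℂ E]
    (T : E →ₗ[ℂ] E) [IsStarNormal T] :
    ∃ (b : OrthonormalBasis (Fin (Module.finrank ℂ E)) ℂ E) (μ : Fin (Module.finrank ℂ E) → ℂ),
      ∀ k, T (b k) = μ k • b k := by
  classical
  have hre : (ℜ T : E →ₗ[ℂ] E).IsSymmetric :=
    (LinearMap.isSymmetric_iff_isSelfAdjoint _).mpr (ℜ T).2
  have him : (ℑ T : E →ₗ[ℂ] E).IsSymmetric :=
    (LinearMap.isSymmetric_iff_isSelfAdjoint _).mpr (ℑ T).2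
  set V : ℂ × ℂ → Submodule ℂ E :=
    fun α => Module.End.eigenspace (ℜ T : E →ₗ[ℂ] E) α.2 ⊓ Module.End.eigenspace (ℑ T) α.1
  have hint : DirectSum.IsInternal V :=
    hre.directSum_isInternal_of_commute him (Commute.realPart_imaginaryPart T)
  have hfam := (hre.orthogonalFamily_eigenspace_inf_eigenspace him).comp
    (Subtype.val_injective (p := fun α => V α ≠ ⊥))
  have : Fintype {α // V α ≠ ⊥} :=
    (Submodule.finite_ne_bot_of_iSupIndep hint.submodule_iSupIndep).fintype
  have hint' := DirectSum.isInternal_ne_bot_iff.mpr hint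
  let α k := (hint'.subordinateOrthonormalBasisIndex rfl k hfam).1
  refine ⟨hint'.subordinateOrthonormalBasis rfl hfam, fun k => (α k).2 + Complex.I * (α k).1,
    fun k => ?_⟩
  obtain ⟨hk_re, hk_im⟩ := hint'.subordinateOrthonormalBasis_subordinate rfl k hfam
  conv_lhs => rw [← realPart_add_I_smul_imaginaryPart T]
  rw [LinearMap.add_apply, LinearMap.smul_apply, Module.End.mem_eigenspace_iff.mp hk_re,
    Module.End.mem_eigenspace_iff.mp hk_im, smul_smul, add_smul]

theorem exists_orthonormalBasis_smul_eq_of_pairwise_inner_eq_zero {𝕜 E ι : Type*} [RCLike 𝕜]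
    [NormedAddCommGroup E] [InnerProductSpace 𝕜 E] [FiniteDimensional 𝕜 E] [Fintype ι]
    (hcard : Module.finrank 𝕜 E = Fintype.card ι) (v : ι → E)
    (hv : Pairwise fun i j => ⟪v i, v j⟫_𝕜 = 0) :
    ∃ q : OrthonormalBasis ι 𝕜 E, ∀ i, v i = (‖v i‖ : 𝕜) • q i := by
  set s := {i | v i ≠ 0}
  let w i := (‖v i‖⁻¹ : 𝕜) • v i
  have hw : Orthonormal 𝕜 (s.domRestrict w) :=
    ⟨fun i => norm_smul_inv_norm i.2, fun i j hij => by
      simp [w, Set.domRestrict_apply, inner_smul_left, inner_smul_right,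
        hv (Subtype.coe_ne_coe.mpr hij)]⟩
  obtain ⟨q, hq⟩ := hw.exists_orthonormalBasis_extension_of_card_eq hcard
  refine ⟨q, fun i => ?_⟩
  by_cases hi : v i = 0
  · simp [hi]
  · rw [hq i hi, smul_smul, mul_inv_cancel₀ (by simpa using hi), one_smul]

variable {ι : Type*} [Fintype ι] [DecidableEq ι]

theorem Matrix.exists_orthonormalBasis_eigenvectors_of_isStarNormal (A : Matrix ι ι ℂ)
    [IsStarNormal A] :
    ∃ (b : OrthonormalBasis ι ℂ (EuclideanSpace ℂ ι)) (μ : ι → ℂ),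
      ∀ k, toEuclideanLin A (b k) = μ k • b k := by
  have : IsStarNormal (toEuclideanLin A) := by
    refine ⟨?_⟩
    rw [LinearMap.star_eq_adjoint, ← toEuclideanLin_conjTranspose_eq_adjoint, Commute, SemiconjBy,
      Module.End.mul_eq_comp, Module.End.mul_eq_comp, ← toLpLin_mul_same, ← toLpLin_mul_same,
      ← star_eq_conjTranspose, star_comm_self' A]
  obtain ⟨b, μ, h⟩ := (toEuclideanLin A).exists_orthonormalBasis_eigenvectors_of_isStarNormal
  let e : ι ≃ Fin (Module.finrank ℂ (EuclideanSpace ℂ ι)) :=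
    Fintype.equivFinOfCardEq finrank_euclideanSpace.symm
  exact ⟨b.reindex e.symm, μ ∘ e, fun k => by simpa using h (e k)⟩

theorem Matrix.exists_orthonormalBasis_toEuclideanLin_eq_smul (A : Matrix ι ι ℂ) :
    ∃ p q : OrthonormalBasis ι ℂ (EuclideanSpace ℂ ι),
      ∀ k, toEuclideanLin A (p k) = (‖toEuclideanLin A (p k)‖ : ℂ) • q k := by
  have hAA := isHermitian_conjTranspose_mul_self A
  set p := hAA.eigenvectorBasis
  have horth : Pairwise fun k l => ⟪toEuclideanLin A (p k), toEuclideanLin A (p l)⟫_ℂ = 0 := by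
    intro k l hkl
    rw [← LinearMap.adjoint_inner_right, ← toEuclideanLin_conjTranspose_eq_adjoint,
      ← LinearMap.comp_apply, ← toLpLin_mul_same, toLpLin_apply, hAA.mulVec_eigenvectorBasis,
      WithLp.toLp_smul, WithLp.toLp_ofLp, inner_smul_right_eq_smul, p.orthonormal.2 hkl,
      smul_zero]
  obtain ⟨q, hq⟩ := exists_orthonormalBasis_smul_eq_of_pairwise_inner_eq_zero
    finrank_euclideanSpace _ horth
  exact ⟨p, q, hq⟩

theorem Matrix.eq_toMatrix_mul_diagonal_mul_star (A : Matrix ι ι ℂ)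
    (p q : OrthonormalBasis ι ℂ (EuclideanSpace ℂ ι)) (σ : ι → ℂ)
    (h : ∀ k, toEuclideanLin A (p k) = σ k • q k) :
    A = (EuclideanSpace.basisFun ι ℂ).toBasis.toMatrix q * diagonal σ *
      star ((EuclideanSpace.basisFun ι ℂ).toBasis.toMatrix p) := by
  set P := (EuclideanSpace.basisFun ι ℂ).toBasis.toMatrix p
  set Q := (EuclideanSpace.basisFun ι ℂ).toBasis.toMatrix q
  have hAP : A * P = Q * diagonal σ := by
    ext i k
    rw [mul_diagonal]
    simpa [P, Q, Module.Basis.toMatrix_apply, mul_apply, mulVec, dotProduct, mul_comm]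
      using congr($(h k) i)
  calc A = A * (P * star P) := by
        rw [(EuclideanSpace.basisFun ι ℂ).toMatrix_orthonormalBasis_mem_unitary p |>.2, mul_one]
    _ = Q * diagonal σ * star P := by rw [← mul_assoc, hAP]

theorem Matrix.diagonal_mem_unitaryGroup {c : ι → ℂ} (hc : ∀ k, ‖c k‖ = 1) :
    diagonal c ∈ unitaryGroup ι ℂ := by
  rw [mem_unitaryGroup_iff, star_eq_conjTranspose, diagonal_conjTranspose, diagonal_mul_diagonal,
    ← diagonal_one]
  congr 1
  ext k
  rw [Pi.star_apply, Complex.star_def, Complex.mul_conj, Complex.normSq_eq_norm_sq, hc k]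
  norm_num

theorem Matrix.exists_mem_unitaryGroup_eq_two_inv_smul_add (A : Matrix ι ι ℂ)
    (hA : opNorm A ≤ 1) :
    ∃ U ∈ unitaryGroup ι ℂ, ∃ V ∈ unitaryGroup ι ℂ, A = (2⁻¹ : ℂ) • (U + V) := by
  obtain ⟨p, q, h⟩ := exists_orthonormalBasis_toEuclideanLin_eq_smul A
  let σ : ι → ℝ := fun k => ‖toEuclideanLin A (p k)‖
  have hσ k : σ k ≤ 1 := by
    simpa [p.orthonormal.1 k] using (norm_toEuclideanLin_le_opNorm A (p k)).trans
      (mul_le_mul_of_nonneg_right hA (norm_nonneg _))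
  -- `σ k ∈ [0, 1]` is the real part of the unimodular number `c k`
  let c : ι → ℂ := fun k => ⟨σ k, Real.sqrt (1 - σ k ^ 2)⟩
  have hc k : ‖c k‖ = 1 := by
    have : σ k ^ 2 ≤ 1 := pow_le_one₀ (norm_nonneg _) (hσ k)
    rw [Complex.norm_def, Complex.normSq_mk, Real.mul_self_sqrt (by linarith), ← sq,
      add_sub_cancel, Real.sqrt_one]
  have hσc k : (σ k : ℂ) = 2⁻¹ * (c k + star (c k)) := by
    rw [Complex.star_def, Complex.add_conj]
    simp [c]
  set P := (EuclideanSpace.basisFun ι ℂ).toBasis.toMatrix p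
  set Q := (EuclideanSpace.basisFun ι ℂ).toBasis.toMatrix q
  have hP := (EuclideanSpace.basisFun ι ℂ).toMatrix_orthonormalBasis_mem_unitary p
  have hQ := (EuclideanSpace.basisFun ι ℂ).toMatrix_orthonormalBasis_mem_unitary q
  refine ⟨Q * diagonal c * star P,
    mul_mem (mul_mem hQ (diagonal_mem_unitaryGroup hc)) (Unitary.star_mem hP),
    Q * diagonal (star c) * star P,
    mul_mem (mul_mem hQ (diagonal_mem_unitaryGroup fun k => (norm_star _).trans (hc k)))
      (Unitary.star_mem hP), ?_⟩
  rw [eq_toMatrix_mul_diagonal_mul_star A p q (fun k => σ k) h, ← add_mul, ← mul_add,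
    diagonal_add, ← smul_mul_assoc, ← mul_smul_comm, ← diagonal_smul]
  congr 3
  ext k
  exact hσc k

end Decompositions

section KroneckerBound

variable {ι κ : Type*} [Fintype ι] [DecidableEq ι] [Fintype κ] [DecidableEq κ]

lemma numRadius_kronecker_le_of_mem_unitaryGroup {U : Matrix ι ι ℂ}
    (hU : U ∈ unitaryGroup ι ℂ) (B : Matrix κ κ ℂ) : numRadius (U ⊗ₖ B) ≤ numRadius B := by
  have : IsStarNormal U :=
    ⟨(Unitary.star_mul_self_of_mem hU).trans (Unitary.mul_star_self_of_mem hU).symm⟩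
  obtain ⟨b, μ, h⟩ := exists_orthonormalBasis_eigenvectors_of_isStarNormal U
  have hμ k : ‖μ k‖ ≤ 1 := by
    have := ContinuousLinearMap.norm_map_of_mem_unitary
      (Unitary.map_mem (toEuclideanCLM (𝕜 := ℂ) (n := ι)) hU) (b k)
    change ‖toEuclideanLin U (b k)‖ = _ at this
    rw [h, norm_smul, b.orthonormal.1 k, mul_one] at this
    exact this.le
  rw [eq_toMatrix_mul_diagonal_mul_star U b b μ h]
  exact numRadius_mul_diagonal_mul_star_kronecker_le
    ((EuclideanSpace.basisFun ι ℂ).toMatrix_orthonormalBasis_mem_unitary b) μ hμ B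

lemma numRadius_kronecker_le_of_opNorm_le_one (A : Matrix ι ι ℂ) (hA : opNorm A ≤ 1)
    (B : Matrix κ κ ℂ) : numRadius (A ⊗ₖ B) ≤ numRadius B := by
  obtain ⟨U, hU, V, hV, rfl⟩ := exists_mem_unitaryGroup_eq_two_inv_smul_add A hA
  rw [smul_kronecker, add_kronecker]
  calc numRadius ((2⁻¹ : ℂ) • (U ⊗ₖ B + V ⊗ₖ B))
      ≤ ‖(2⁻¹ : ℂ)‖ * (numRadius (U ⊗ₖ B) + numRadius (V ⊗ₖ B)) :=
        (numRadius_smul_le _ _).trans (by gcongr; exact numRadius_add_le _ _)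
    _ ≤ ‖(2⁻¹ : ℂ)‖ * (numRadius B + numRadius B) := by
        gcongr
        exacts [numRadius_kronecker_le_of_mem_unitaryGroup hU B,
          numRadius_kronecker_le_of_mem_unitaryGroup hV B]
    _ = numRadius B := by norm_num; ring

lemma numRadius_kronecker_le_opNorm_mul (A : Matrix ι ι ℂ) (B : Matrix κ κ ℂ) :
    numRadius (A ⊗ₖ B) ≤ opNorm A * numRadius B := by
  rcases eq_or_ne A 0 with rfl | hA
  · rw [zero_kronecker]
    exact (numRadius_le le_rfl fun x _ => by simp).trans
      (mul_nonneg (norm_nonneg _) (numRadius_nonneg B))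
  have ha : 0 < opNorm A :=
    norm_pos_iff.mpr ((map_ne_zero_iff _ (toEuclideanCLM (𝕜 := ℂ) (n := ι)).injective).mpr hA)
  set a := opNorm A
  have hA₁ : opNorm ((a⁻¹ : ℂ) • A) ≤ 1 := by
    rw [opNorm_smul, norm_inv, Complex.norm_real, Real.norm_of_nonneg ha.le,
      inv_mul_cancel₀ ha.ne']
  have hsplit : A ⊗ₖ B = (a : ℂ) • (((a⁻¹ : ℂ) • A) ⊗ₖ B) := by
    rw [smul_kronecker, smul_smul, mul_inv_cancel₀ (by exact_mod_cast ha.ne'), one_smul]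
  calc numRadius (A ⊗ₖ B) ≤ ‖(a : ℂ)‖ * numRadius (((a⁻¹ : ℂ) • A) ⊗ₖ B) :=
        hsplit ▸ numRadius_smul_le _ _
    _ ≤ a * numRadius B := by
        rw [Complex.norm_real, Real.norm_of_nonneg ha.le]
        gcongr
        exact numRadius_kronecker_le_of_opNorm_le_one _ hA₁ B

end KroneckerBound

theorem stmt0 (n m : ℕ) (A : Matrix (Fin n) (Fin n) ℂ) (B : Matrix (Fin m) (Fin m) ℂ) :
    numRadius (A ⊗ₖ B) ≤ min (opNorm A * numRadius B) (opNorm B * numRadius A) :=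
  le_min (numRadius_kronecker_le_opNorm_mul A B)
    ((numRadius_kronecker_comm_le A B).trans (numRadius_kronecker_le_opNorm_mul B A))
end

section
/- For an n-by-n complex matrix A, the following are equivalent: (1) ‖A^k‖ = ‖A‖^k for all k ≥ 1; (2) ‖A‖ = ρ(A), the spectral radius of A; (3) ‖A‖ = w(A), the numerical radius of A. -/
open scoped Kronecker InnerProductSpace

/-- The spectral radius of a complex matrix: the maximum modulus of its eigenvalues. -/
noncomputable def specRad {n : Type*} [Fintype n] [DecidableEq n] (A : Matrix n n ℂ) : ℝ :=
  sSup {r : ℝ | ∃ μ ∈ spectrum ℂ A, r = ‖μ‖}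

/-!
An eigenvalue `μ` with unit eigenvector `x` equals `⟪x, A x⟫`, so `ρ(A) ≤ w(A) ≤ ‖A‖` always.
Gelfand's formula `ρ(A) = lim ‖A ^ k‖ ^ (1 / k)` gives (1) ⇒ (2); conversely
`‖A‖ ^ k = ρ(A) ^ k ≤ ρ(A ^ k) ≤ ‖A ^ k‖ ≤ ‖A‖ ^ k`. If `w(A) = ‖A‖`, the supremum defining `w(A)`
is attained at a unit vector `x` by compactness of the sphere, and `|⟪x, A x⟫| = ‖A‖ ≥ ‖A x‖`
is the equality case of Cauchy–Schwarz: `x` is an eigenvector whose eigenvalue has modulus `‖A‖`.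
-/

open Filter
open scoped ENNReal NNReal

section BanachAlgebra

variable {𝕜 A : Type*} [NontriviallyNormedField 𝕜] [ProperSpace 𝕜] [NormedRing A]
  [NormedAlgebra 𝕜 A] [CompleteSpace A]

theorem toReal_spectralRadius_eq_sSup_norm (a : A) :
    (spectralRadius 𝕜 a).toReal = sSup {r : ℝ | ∃ μ ∈ spectrum 𝕜 a, r = ‖μ‖} := by
  rcases (spectrum 𝕜 a).eq_empty_or_nonempty with hempty | hne
  · simp [spectralRadius, hempty]
  obtain ⟨μ, hμ, hsr⟩ := spectrum.exists_nnnorm_eq_spectralRadius_of_nonempty hne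
  rw [← hsr]
  refine (IsGreatest.csSup_eq ⟨?_, ?_⟩).symm
  · exact ⟨μ, hμ, rfl⟩
  rintro r ⟨ν, hν, rfl⟩
  have : (‖ν‖₊ : ℝ≥0∞) ≤ ‖μ‖₊ := hsr ▸ le_iSup₂ (α := ℝ≥0∞) ν hν
  exact_mod_cast this

end BanachAlgebra

namespace ContinuousLinearMap

section Normed

variable {𝕜 E : Type*} [NontriviallyNormedField 𝕜] [NormedAddCommGroup E] [NormedSpace 𝕜 E]
  [CompleteSpace E]

theorem norm_le_opNorm_of_mem_spectrum (T : E →L[𝕜] E) {μ : 𝕜} (hμ : μ ∈ spectrum 𝕜 T) :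
    ‖μ‖ ≤ ‖T‖ :=
  (spectrum.norm_le_norm_mul_of_mem hμ).trans (mul_le_of_le_one_right (norm_nonneg T) norm_id_le)

theorem mem_spectrum_of_apply_eq_smul (T : E →L[𝕜] E) {x : E} (hx : x ≠ 0) {μ : 𝕜}
    (h : T x = μ • x) : μ ∈ spectrum 𝕜 T := by
  rw [spectrum_eq]
  exact Module.End.HasEigenvalue.mem_spectrum
    (Module.End.hasEigenvalue_of_hasEigenvector ⟨Module.End.mem_eigenspace_iff.2 h, hx⟩)

theorem spectralRadius_le_nnnorm (T : E →L[𝕜] E) : spectralRadius 𝕜 T ≤ ‖T‖₊ :=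
  iSup₂_le fun _ hμ ↦ mod_cast T.norm_le_opNorm_of_mem_spectrum hμ

end Normed

section RCLike

variable {𝕜 E : Type*} [RCLike 𝕜] [NormedAddCommGroup E]

theorem exists_norm_eq_one_apply_eq_smul_of_mem_spectrum [NormedSpace 𝕜 E]
    [FiniteDimensional 𝕜 E] (T : E →L[𝕜] E) {μ : 𝕜} (hμ : μ ∈ spectrum 𝕜 T) :
    ∃ x : E, ‖x‖ = 1 ∧ T x = μ • x := by
  have := FiniteDimensional.complete 𝕜 E
  rw [spectrum_eq, ← Module.End.hasEigenvalue_iff_mem_spectrum] at hμ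
  obtain ⟨x, hx, hx0⟩ := hμ.exists_hasEigenvector
  refine ⟨(‖x‖⁻¹ : 𝕜) • x, ?_, ?_⟩
  · simp [norm_smul, hx0]
  · rw [map_smul, ← coe_coe, Module.End.mem_eigenspace_iff.1 hx, smul_comm]

variable [InnerProductSpace 𝕜 E]

theorem norm_inner_apply_self_le (T : E →L[𝕜] E) {x : E} (hx : ‖x‖ = 1) : ‖⟪x, T x⟫_𝕜‖ ≤ ‖T‖ :=
  calc ‖⟪x, T x⟫_𝕜‖ ≤ ‖x‖ * ‖T x‖ := norm_inner_le_norm _ _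
    _ ≤ ‖x‖ * (‖T‖ * ‖x‖) := by gcongr; exact T.le_opNorm x
    _ = ‖T‖ := by rw [hx, one_mul, mul_one]

theorem apply_eq_inner_smul_of_norm_inner_eq (T : E →L[𝕜] E) {x : E} (hx : ‖x‖ = 1)
    (h : ‖⟪x, T x⟫_𝕜‖ = ‖T‖) : T x = ⟪x, T x⟫_𝕜 • x := by
  have hcs : ‖⟪x, T x⟫_𝕜‖ = ‖x‖ * ‖T x‖ := by
    refine le_antisymm (norm_inner_le_norm _ _) ?_
    simpa [hx, h] using T.le_opNorm x
  have hx0 : x ≠ 0 := norm_ne_zero_iff.1 (by simp [hx])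
  have hTx : x = 0 ∨ T x = (⟪x, T x⟫_𝕜 / ⟪x, x⟫_𝕜) • x :=
    ((norm_inner_eq_norm_tfae 𝕜 x (T x)).out 0 1).1 hcs
  rw [inner_self_eq_norm_sq_to_K, hx, RCLike.ofReal_one, one_pow, div_one] at hTx
  exact hTx.resolve_left hx0

theorem inner_apply_self_mem_spectrum_of_norm_inner_eq [CompleteSpace E] (T : E →L[𝕜] E) {x : E}
    (hx : ‖x‖ = 1) (h : ‖⟪x, T x⟫_𝕜‖ = ‖T‖) : ⟪x, T x⟫_𝕜 ∈ spectrum 𝕜 T :=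
  T.mem_spectrum_of_apply_eq_smul (norm_ne_zero_iff.1 (by simp [hx]))
    (T.apply_eq_inner_smul_of_norm_inner_eq hx h)

end RCLike

variable {E : Type*} [NormedAddCommGroup E] [NormedSpace ℂ E] [CompleteSpace E]

theorem norm_eq_toReal_spectralRadius_iff (T : E →L[ℂ] E) :
    ‖T‖ = (spectralRadius ℂ T).toReal ↔ spectralRadius ℂ T = ‖T‖₊ := by
  rw [← ENNReal.toReal_eq_toReal_iff' (ne_top_of_le_ne_top ENNReal.coe_ne_top
    T.spectralRadius_le_nnnorm) ENNReal.coe_ne_top, eq_comm, ENNReal.coe_toReal, coe_nnnorm]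

theorem norm_pow_eq_pow_norm_iff_spectralRadius_eq (T : E →L[ℂ] E) :
    (∀ k : ℕ, 1 ≤ k → ‖T ^ k‖ = ‖T‖ ^ k) ↔ spectralRadius ℂ T = ‖T‖₊ := by
  constructor
  · intro h
    have hconst : ∀ᶠ k : ℕ in atTop, (‖T ^ k‖₊ : ℝ≥0∞) ^ (1 / k : ℝ) = ‖T‖₊ := by
      filter_upwards [eventually_ge_atTop 1] with k hk
      have hk' : ‖T ^ k‖₊ = ‖T‖₊ ^ k := NNReal.eq (by simpa using h k hk)
      rw [hk', ENNReal.coe_pow, ← ENNReal.rpow_natCast, ← ENNReal.rpow_mul,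
        mul_one_div_cancel (by positivity), ENNReal.rpow_one]
    exact tendsto_nhds_unique (spectrum.pow_nnnorm_pow_one_div_tendsto_nhds_spectralRadius T)
      (tendsto_const_nhds.congr' (hconst.mono fun _ ↦ Eq.symm))
  · intro h k hk
    refine le_antisymm (norm_pow_le' T hk) ?_
    have : ((‖T‖₊ ^ k : ℝ≥0) : ℝ≥0∞) ≤ ‖T ^ k‖₊ :=
      calc ((‖T‖₊ ^ k : ℝ≥0) : ℝ≥0∞) = spectralRadius ℂ T ^ k := by rw [h, ENNReal.coe_pow]
        _ ≤ spectralRadius ℂ (T ^ k) := spectrum.spectralRadius_pow_le T k (by omega)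
        _ ≤ ‖T ^ k‖₊ := (T ^ k).spectralRadius_le_nnnorm
    exact_mod_cast ENNReal.coe_le_coe.1 this

end ContinuousLinearMap

namespace Matrix

variable {ι : Type*} [Fintype ι] [DecidableEq ι] (A : Matrix ι ι ℂ)

theorem spectrum_toEuclideanCLM : spectrum ℂ (toEuclideanCLM (𝕜 := ℂ) A) = spectrum ℂ A :=
  AlgEquiv.spectrum_eq (toEuclideanCLM (n := ι) (𝕜 := ℂ)) A

theorem specRad_eq_toReal_spectralRadius :
    specRad A = (spectralRadius ℂ (toEuclideanCLM (𝕜 := ℂ) A)).toReal := by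
  rw [toReal_spectralRadius_eq_sSup_norm, spectrum_toEuclideanCLM, specRad]

theorem specRad_nonneg : 0 ≤ specRad A :=
  Real.sSup_nonneg (by rintro r ⟨μ, -, rfl⟩; exact norm_nonneg μ)

theorem norm_le_specRad {μ : ℂ} (hμ : μ ∈ spectrum ℂ A) : ‖μ‖ ≤ specRad A := by
  refine le_csSup ⟨opNorm A, ?_⟩ ⟨μ, hμ, rfl⟩
  rintro r ⟨ν, hν, rfl⟩
  rw [← spectrum_toEuclideanCLM] at hν
  exact ContinuousLinearMap.norm_le_opNorm_of_mem_spectrum _ hν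

theorem numRadius_le_opNorm : numRadius A ≤ opNorm A := by
  refine Real.sSup_le ?_ (norm_nonneg _)
  rintro r ⟨x, hx, rfl⟩
  exact (toEuclideanCLM (𝕜 := ℂ) A).norm_inner_apply_self_le hx

theorem le_numRadius {x : EuclideanSpace ℂ ι} (hx : ‖x‖ = 1) :
    ‖⟪x, toEuclideanCLM (𝕜 := ℂ) A x⟫_ℂ‖ ≤ numRadius A := by
  refine le_csSup ⟨opNorm A, ?_⟩ ⟨x, hx, rfl⟩
  rintro r ⟨y, hy, rfl⟩
  exact (toEuclideanCLM (𝕜 := ℂ) A).norm_inner_apply_self_le hy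

theorem specRad_le_numRadius : specRad A ≤ numRadius A := by
  refine Real.sSup_le ?_ (Real.sSup_nonneg (by rintro r ⟨x, -, rfl⟩; exact norm_nonneg _))
  rintro r ⟨μ, hμ, rfl⟩
  rw [← spectrum_toEuclideanCLM] at hμ
  obtain ⟨x, hx, hxμ⟩ :=
    ContinuousLinearMap.exists_norm_eq_one_apply_eq_smul_of_mem_spectrum _ hμ
  have hinner : ⟪x, toEuclideanCLM (𝕜 := ℂ) A x⟫_ℂ = μ := by
    rw [hxμ, inner_smul_right, inner_self_eq_norm_sq_to_K, hx]
    simp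
  simpa [hinner] using le_numRadius A hx

theorem exists_norm_inner_eq_numRadius [Nonempty ι] :
    ∃ x : EuclideanSpace ℂ ι, ‖x‖ = 1 ∧ ‖⟪x, toEuclideanCLM (𝕜 := ℂ) A x⟫_ℂ‖ = numRadius A := by
  set T := toEuclideanCLM (𝕜 := ℂ) A
  have hcont : Continuous fun y : EuclideanSpace ℂ ι ↦ ‖⟪y, T y⟫_ℂ‖ := by fun_prop
  obtain ⟨x, hx, hmax⟩ := (isCompact_sphere (0 : EuclideanSpace ℂ ι) 1).exists_isMaxOn
    (NormedSpace.sphere_nonempty.2 zero_le_one) hcont.continuousOn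
  rw [mem_sphere_zero_iff_norm] at hx
  refine ⟨x, hx, le_antisymm (le_numRadius A hx) (Real.sSup_le ?_ (norm_nonneg _))⟩
  rintro r ⟨y, hy, rfl⟩
  exact hmax (mem_sphere_zero_iff_norm.2 hy)

theorem opNorm_le_specRad_of_opNorm_eq_numRadius (h : opNorm A = numRadius A) :
    opNorm A ≤ specRad A := by
  rcases isEmpty_or_nonempty ι with hι | hι
  · rw [opNorm, Subsingleton.elim (toEuclideanCLM (𝕜 := ℂ) A) 0, norm_zero]
    exact specRad_nonneg A
  obtain ⟨x, hx, hxA⟩ := exists_norm_inner_eq_numRadius A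
  have hmem := ContinuousLinearMap.inner_apply_self_mem_spectrum_of_norm_inner_eq _ hx
    (hxA.trans h.symm)
  rw [spectrum_toEuclideanCLM] at hmem
  exact h.trans_le (hxA.symm.trans_le (norm_le_specRad A hmem))

end Matrix

open Matrix in
theorem stmt3 (n : ℕ) (A : Matrix (Fin n) (Fin n) ℂ) :
    ((∀ k : ℕ, 1 ≤ k → opNorm (A ^ k) = opNorm A ^ k) ↔ opNorm A = specRad A) ∧
      (opNorm A = specRad A ↔ opNorm A = numRadius A) := by
  refine ⟨?_, fun h ↦ ?_, fun h ↦ ?_⟩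
  · simp only [opNorm, map_pow, specRad_eq_toReal_spectralRadius,
      ContinuousLinearMap.norm_eq_toReal_spectralRadius_iff]
    exact ContinuousLinearMap.norm_pow_eq_pow_norm_iff_spectralRadius_eq _
  · exact le_antisymm (h.trans_le (specRad_le_numRadius A)) (numRadius_le_opNorm A)
  · exact le_antisymm (opNorm_le_specRad_of_opNorm_eq_numRadius A h)
      ((specRad_le_numRadius A).trans (numRadius_le_opNorm A))
end

section
/- If A is an n-by-n complex matrix with ‖A‖ = ρ(A) = 1, then A is unitarily similar to a direct sum [λ] ⊕ C for some complex λ with |λ| = 1; in particular A has a unitary direct summand. -/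
open scoped Kronecker InnerProductSpace

/-- `A` and `B` are unitarily similar (as operators on Euclidean spaces, allowing
different index types of the same dimension). -/
def UnitSim {n m : Type*} [Fintype n] [DecidableEq n] [Fintype m] [DecidableEq m]
    (A : Matrix n n ℂ) (B : Matrix m m ℂ) : Prop :=
  ∃ e : EuclideanSpace ℂ n ≃ₗᵢ[ℂ] EuclideanSpace ℂ m,
    ∀ x, Matrix.toEuclideanLin B (e x) = e (Matrix.toEuclideanLin A x)

/-!
Let `μ` be an eigenvalue of `A` with `|μ| = 1` and `x` a unit eigenvector. Since `‖A‖ ≤ 1`, the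
vector `A* x` lies in the unit ball and has inner product `1` with the unit vector `μ̄ x`, so it
equals `μ̄ x`. Hence `span {x}` reduces `A`, and in an orthonormal basis starting with `x` the
matrix of `A` is `[μ] ⊕ C`.
-/

open Matrix LinearMap ComplexConjugate

section

variable {𝕜 E : Type*} [RCLike 𝕜] [NormedAddCommGroup E] [InnerProductSpace 𝕜 E]

theorem ContinuousLinearMap.adjoint_apply_eq_of_apply_eq_smul [CompleteSpace E]
    {T : E →L[𝕜] E} (hT : ‖T‖ ≤ 1) {μ : 𝕜} (hμ : ‖μ‖ = 1) {x : E} (hx : T x = μ • x) :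
    ContinuousLinearMap.adjoint T x = conj μ • x := by
  set y := ContinuousLinearMap.adjoint T x
  have hy : ‖y‖ ≤ ‖x‖ := by
    calc ‖y‖ ≤ ‖ContinuousLinearMap.adjoint T‖ * ‖x‖ := le_opNorm _ x
      _ ≤ 1 * ‖x‖ := by rw [LinearIsometryEquiv.norm_map]; gcongr
      _ = ‖x‖ := one_mul _
  have hyx : ⟪y, conj μ • x⟫_𝕜 = (‖x‖ ^ 2 : ℝ) := by
    rw [inner_smul_right, ContinuousLinearMap.adjoint_inner_left, hx, inner_smul_right,
      ← mul_assoc, RCLike.conj_mul, hμ, inner_self_eq_norm_sq_to_K]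
    simp
  have hμx : ‖conj μ • x‖ = ‖x‖ := by rw [norm_smul, RCLike.norm_conj, hμ, one_mul]
  have : ‖y - conj μ • x‖ ^ 2 ≤ 0 := by
    rw [@norm_sub_sq 𝕜, hyx, RCLike.ofReal_re, hμx]
    nlinarith [norm_nonneg y, norm_nonneg x]
  exact sub_eq_zero.mp (norm_eq_zero.mp (by nlinarith [norm_nonneg (y - conj μ • x)]))

theorem OrthonormalBasis.exists_sum_fin_one_apply_inl_eq [FiniteDimensional 𝕜 E] {n : ℕ}
    (hn : Module.finrank 𝕜 E = n) {x : E} (hx : ‖x‖ = 1) :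
    ∃ b : OrthonormalBasis (Fin 1 ⊕ Fin (n - 1)) 𝕜 E, b (Sum.inl 0) = x := by
  have : Nontrivial E := ⟨x, 0, ne_zero_of_norm_ne_zero (hx ▸ one_ne_zero)⟩
  have hcard : Module.finrank 𝕜 E = Fintype.card (Fin 1 ⊕ Fin (n - 1)) := by
    have := Module.finrank_pos (R := 𝕜) (M := E)
    simp only [Fintype.card_sum, Fintype.card_fin]
    omega
  have hx' : Orthonormal 𝕜 (({Sum.inl 0} : Set (Fin 1 ⊕ Fin (n - 1))).domRestrict fun _ => x) :=
    ⟨fun _ => hx, fun i j hij => (hij (Subsingleton.elim i j)).elim⟩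
  obtain ⟨b, hb⟩ := hx'.exists_orthonormalBasis_extension_of_card_eq hcard
  exact ⟨b, hb _ rfl⟩

theorem LinearMap.toMatrixOrthonormal_eq_fromBlocks_diagonal [CompleteSpace E]
    [FiniteDimensional 𝕜 E] {m : Type*} [Fintype m] [DecidableEq m] (b : OrthonormalBasis (Fin 1 ⊕ m) 𝕜 E)
    {T : E →L[𝕜] E} {μ : 𝕜} (hT : T (b (Sum.inl 0)) = μ • b (Sum.inl 0))
    (hT' : ContinuousLinearMap.adjoint T (b (Sum.inl 0)) = conj μ • b (Sum.inl 0)) :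
    toMatrixOrthonormal b (T : E →ₗ[𝕜] E) =
      fromBlocks (diagonal fun _ => μ) 0 0 (toMatrixOrthonormal b (T : E →ₗ[𝕜] E)).toBlocks₂₂ := by
  have hb := orthonormal_iff_ite.mp b.orthonormal
  ext (i | i) (j | j)
  · simp [toMatrixOrthonormal_apply_apply, Subsingleton.elim i 0, Subsingleton.elim j 0, hT,
      inner_smul_right]
  · simp only [toMatrixOrthonormal_apply_apply, fromBlocks_apply₁₂,
      ContinuousLinearMap.coe_coe]
    rw [Subsingleton.elim i 0, ← ContinuousLinearMap.adjoint_inner_left, hT']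
    simp [inner_smul_left, hb]
  · simp [toMatrixOrthonormal_apply_apply, Subsingleton.elim j 0, hT, inner_smul_right, hb]
  · rfl

end

theorem exists_mem_spectrum_norm_eq_specRad {n : Type*} [Fintype n] [DecidableEq n]
    {A : Matrix n n ℂ} (h : specRad A ≠ 0) : ∃ μ ∈ spectrum ℂ A, ‖μ‖ = specRad A := by
  have hS : {r : ℝ | ∃ μ ∈ spectrum ℂ A, r = ‖μ‖} = (‖·‖) '' spectrum ℂ A := by
    ext r; simp [eq_comm]
  rw [specRad, hS] at h ⊢
  have hne : ((‖·‖) '' spectrum ℂ A).Nonempty := by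
    by_contra hemp
    exact h (by rw [Set.not_nonempty_iff_eq_empty.mp hemp, Real.sSup_empty])
  exact hne.csSup_mem (A.finite_spectrum.image _)

theorem Matrix.exists_norm_eq_one_toEuclideanLin_apply_eq_smul {𝕜 n : Type*} [RCLike 𝕜]
    [Fintype n] [DecidableEq n] {A : Matrix n n 𝕜} {μ : 𝕜} (hμ : μ ∈ spectrum 𝕜 A) :
    ∃ x : EuclideanSpace 𝕜 n, ‖x‖ = 1 ∧ toEuclideanLin A x = μ • x := by
  rw [← spectrum_toLpLin 2, ← Module.End.hasEigenvalue_iff_mem_spectrum] at hμ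
  obtain ⟨v, hv⟩ := hμ.exists_hasEigenvector
  exact ⟨(‖v‖⁻¹ : 𝕜) • v, norm_smul_inv_norm hv.2, by rw [map_smul, hv.apply_eq_smul, smul_comm]⟩

theorem unitSim_toMatrixOrthonormal {n m : Type*} [Fintype n] [DecidableEq n] [Fintype m]
    [DecidableEq m] (A : Matrix n n ℂ) (b : OrthonormalBasis m ℂ (EuclideanSpace ℂ n)) :
    UnitSim A (toMatrixOrthonormal b (toEuclideanLin A)) :=
  ⟨b.repr, fun x => by
    have h := toMatrix_mulVec_repr b.toBasis b.toBasis (toEuclideanLin A) x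
    rw [show ⇑(b.toBasis.repr x) = (b.repr x).ofLp from funext (b.coe_toBasis_repr_apply x)] at h
    ext i
    simpa using congrFun h i⟩

theorem stmt4 (n : ℕ) (A : Matrix (Fin n) (Fin n) ℂ)
    (h1 : opNorm A = 1) (h2 : specRad A = 1) :
    ∃ (lam : ℂ) (C : Matrix (Fin (n - 1)) (Fin (n - 1)) ℂ), ‖lam‖ = 1 ∧
      UnitSim A (Matrix.fromBlocks (Matrix.diagonal fun _ : Fin 1 => lam) 0 0 C) := by
  obtain ⟨μ, hμ, hμ1⟩ := exists_mem_spectrum_norm_eq_specRad (h2 ▸ one_ne_zero)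
  rw [h2] at hμ1
  obtain ⟨x, hx1, hAx⟩ := exists_norm_eq_one_toEuclideanLin_apply_eq_smul hμ
  obtain ⟨b, rfl⟩ :=
    OrthonormalBasis.exists_sum_fin_one_apply_inl_eq (finrank_euclideanSpace_fin (𝕜 := ℂ)) hx1
  have hA'x := ContinuousLinearMap.adjoint_apply_eq_of_apply_eq_smul h1.le hμ1 hAx
  refine ⟨μ, (toMatrixOrthonormal b (toEuclideanLin A)).toBlocks₂₂, hμ1, ?_⟩
  exact toMatrixOrthonormal_eq_fromBlocks_diagonal b hAx hA'x ▸ unitSim_toMatrixOrthonormal A b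
end

section
/- For positive integers n and m, the numerical range of J_n ⊗ J_m equals the numerical range of J_ℓ where ℓ = min{n, m}; in particular w(J_n ⊗ J_m) = cos(π/(ℓ+1)) = min{w(J_n), w(J_m)}. -/
open scoped Kronecker InnerProductSpace

/-- The numerical range of a complex matrix: `{⟨Ax, x⟩ : ‖x‖ = 1}`. -/
noncomputable def numRange {n : Type*} [Fintype n] [DecidableEq n] (A : Matrix n n ℂ) : Set ℂ :=
  {z : ℂ | ∃ x : EuclideanSpace ℂ n, ‖x‖ = 1 ∧ z = ⟪x, Matrix.toEuclideanLin A x⟫_ℂ}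

/-- The `m`-by-`m` nilpotent Jordan block: zero diagonal, ones on the superdiagonal. -/
def Jordan (m : ℕ) : Matrix (Fin m) (Fin m) ℂ :=
  fun i j => if (i : ℕ) + 1 = (j : ℕ) then 1 else 0

/-!
The upper bound is a weighted AM-GM inequality. Suppose every nonzero entry of a 0-1 matrix `A`
joins an index of level `l` to one of level `l + 1`, the levels lie in `1, …, L`, and each index
carries at most one entry in its row and one in its column. With `θ = π / (L + 1)` the weights
`w l = sin (l θ)` are positive on `1, …, L` and satisfy `w (l + 1) + w (l - 1) = 2 cos θ w l`, so
bounding each `|x_i| |x_j|` by `(w_j / 2 w_i) |x_i|² + (w_i / 2 w_j) |x_j|²` (`w_i` being the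
weight of the level of `i`) and collecting terms gives `|⟨x, A x⟩| ≤ cos θ ‖x‖²`. In `J_n ⊗ J_m` the index `(i, j)` has level `min i j + 1 ≤ ℓ`.

Conversely `J_ℓ` is the principal submatrix of `J_n ⊗ J_m` on the indices `(i, i)`, and the
numerical range of `J_ℓ` is the whole disc: it is connected (an image of the unit sphere),
invariant under rotations (conjugate by `diag (ω ^ i)`), and contains `0` and, at the sine
vector, `cos (π / (ℓ + 1))`.
-/

open Finset Real

section NumericalRange

variable {ι : Type*} [Fintype ι] [DecidableEq ι]

lemma inner_toEuclideanLin_self (A : Matrix ι ι ℂ) (x : EuclideanSpace ℂ ι) :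
    ⟪x, Matrix.toEuclideanLin A x⟫_ℂ = ∑ i, ∑ j, star (x i) * A i j * x j := by
  simp [EuclideanSpace.inner_eq_star_dotProduct, Matrix.toLpLin_apply, Matrix.mulVec, dotProduct,
    sum_mul]
  ac_rfl

lemma diag_mem_numRange (A : Matrix ι ι ℂ) (i : ι) : A i i ∈ numRange A :=
  ⟨EuclideanSpace.single i 1, by simp, by simp [inner_toEuclideanLin_self]⟩

lemma inner_div_norm_sq_mem_numRange (A : Matrix ι ι ℂ)
    {x : EuclideanSpace ℂ ι} (hx : x ≠ 0) :
    ⟪x, Matrix.toEuclideanLin A x⟫_ℂ / (‖x‖ : ℂ) ^ 2 ∈ numRange A := by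
  refine ⟨(‖x‖⁻¹ : ℂ) • x, ?_, ?_⟩
  · rw [norm_smul, norm_inv, Complex.norm_real, norm_norm, inv_mul_cancel₀ (norm_ne_zero_iff.2 hx)]
  · rw [map_smul, inner_smul_left, inner_smul_right, ← mul_assoc, map_inv₀, Complex.conj_ofReal,
      div_eq_inv_mul]
    ring

lemma isPreconnected_numRange [Nonempty ι] (A : Matrix ι ι ℂ) : IsPreconnected (numRange A) := by
  have hrank : 1 < Module.rank ℝ (EuclideanSpace ℂ ι) := by
    rw [← Module.finrank_eq_rank, finrank_real_of_complex, finrank_euclideanSpace]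
    exact_mod_cast (by have := Fintype.card_pos (α := ι); omega : 1 < 2 * Fintype.card ι)
  have : numRange A = (fun x => ⟪x, Matrix.toEuclideanLin A x⟫_ℂ) '' Metric.sphere 0 1 := by
    ext z; simp [numRange, eq_comm]
  rw [this]
  exact (isPreconnected_sphere hrank 0 1).image _ (by fun_prop)

lemma mul_mem_numRange_of_graded (A : Matrix ι ι ℂ) (lvl : ι → ℕ)
    (hA : ∀ i j, A i j ≠ 0 → lvl j = lvl i + 1) {ω : ℂ} (hω : ‖ω‖ = 1) {z : ℂ}
    (hz : z ∈ numRange A) : ω * z ∈ numRange A := by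
  obtain ⟨x, hx, rfl⟩ := hz
  have hωω : star ω * ω = 1 := by
    rw [RCLike.star_def, RCLike.conj_mul, hω]; simp
  refine ⟨WithLp.toLp 2 fun i => ω ^ lvl i * x i, ?_, ?_⟩
  · rw [← hx, EuclideanSpace.norm_eq, EuclideanSpace.norm_eq]
    simp [hω]
  · simp only [inner_toEuclideanLin_self, mul_sum]
    refine sum_congr rfl fun i _ => sum_congr rfl fun j _ => ?_
    by_cases hij : A i j = 0
    · simp [hij]
    · rw [hA i j hij]
      calc ω * (star (x i) * A i j * x j)
          = (star ω * ω) ^ lvl i * ω * (star (x i) * A i j * x j) := by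
            rw [hωω, one_pow, one_mul]
        _ = star (ω ^ lvl i * x i) * A i j * (ω ^ (lvl i + 1) * x j) := by
            simp only [star_mul', star_pow]; ring

lemma numRadius_eq_of_numRange_eq_closedBall (A : Matrix ι ι ℂ) {c : ℝ} (hc : 0 ≤ c)
    (h : numRange A = Metric.closedBall 0 c) : numRadius A = c := by
  have hmem (z : ℂ) : z ∈ numRange A ↔ ‖z‖ ≤ c := by simp [h]
  suffices {r : ℝ | ∃ x : EuclideanSpace ℂ ι, ‖x‖ = 1 ∧
      r = ‖⟪x, Matrix.toEuclideanLin A x⟫_ℂ‖} = Set.Icc 0 c by rw [numRadius, this, csSup_Icc hc]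
  ext r
  constructor
  · rintro ⟨x, hx, rfl⟩
    exact ⟨norm_nonneg _, (hmem _).1 ⟨x, hx, rfl⟩⟩
  · rintro ⟨hr0, hrc⟩
    obtain ⟨x, hx, hxr⟩ := (hmem r).2 (by rwa [Complex.norm_real, Real.norm_of_nonneg hr0])
    exact ⟨x, hx, by rw [← hxr, Complex.norm_real, Real.norm_of_nonneg hr0]⟩

lemma numRange_submatrix_subset {κ : Type*} [Fintype κ] [DecidableEq κ] (B : Matrix κ κ ℂ)
    {f : ι → κ} (hf : f.Injective) :
    numRange (B.submatrix f f) ⊆ numRange B := by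
  rintro _ ⟨x, hx, rfl⟩
  set y : κ → ℂ := Function.extend f x.ofLp 0
  have hy : ∀ k ∉ Set.range f, y k = 0 := fun k hk => by
    simp [y, Function.extend_apply' _ _ _ (fun ⟨i, hi⟩ => hk ⟨i, hi⟩)]
  have hyf : ∀ i, y (f i) = x i := fun i => hf.extend_apply _ _ _
  refine ⟨WithLp.toLp 2 y, ?_, ?_⟩
  · rw [← hx, EuclideanSpace.norm_eq, EuclideanSpace.norm_eq]
    congr 1
    exact (Fintype.sum_of_injective f hf _ (fun k => ‖y k‖ ^ 2) (fun k hk => by simp [hy k hk])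
      (fun i => by simp [hyf])).symm
  · rw [inner_toEuclideanLin_self, inner_toEuclideanLin_self]
    refine Fintype.sum_of_injective f hf _ (fun k => ∑ l, star (y k) * B k l * y l)
      (fun k hk => by simp [hy k hk]) (fun i => ?_)
    exact Fintype.sum_of_injective f hf _ (fun l => star (y (f i)) * B (f i) l * y l)
      (fun l hl => by simp [hy l hl]) (fun j => by simp [hyf])

end NumericalRange

lemma sum_mul_le_cos_mul_sum_sq {ι : Type*} [Fintype ι] {L : ℕ} (lvl : ι → ℕ)
    (hlvl : ∀ i, lvl i ∈ Icc 1 L) (S : Finset (ι × ι)) (hS : ∀ p ∈ S, lvl p.2 = lvl p.1 + 1)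
    (hfst : Set.InjOn Prod.fst (S : Set (ι × ι))) (hsnd : Set.InjOn Prod.snd (S : Set (ι × ι)))
    (a : ι → ℝ) :
    ∑ p ∈ S, a p.1 * a p.2 ≤ cos (π / (L + 1)) * ∑ i, a i ^ 2 := by
  classical
  set θ := π / (L + 1)
  have hθ : 0 < θ := by positivity
  have hLθ : (L + 1) * θ = π := mul_div_cancel₀ π (by positivity)
  have hlvl' (i : ι) : (1 : ℝ) ≤ lvl i ∧ (lvl i : ℝ) ≤ L := by
    exact_mod_cast mem_Icc.1 (hlvl i)
  have sin_nonneg {t : ℝ} (h0 : 0 ≤ t) (hL : t ≤ L + 1) : 0 ≤ sin (t * θ) :=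
    sin_nonneg_of_nonneg_of_le_pi (by positivity) (by rw [← hLθ]; gcongr)
  have sin_pos (i : ι) : 0 < sin (lvl i * θ) := by
    obtain ⟨h1, hL⟩ := hlvl' i
    refine sin_pos_of_pos_of_lt_pi (by positivity) (by rw [← hLθ]; gcongr; linarith)
  set f : ι → ℝ := fun i => sin ((lvl i + 1) * θ) / (2 * sin (lvl i * θ)) * a i ^ 2
  set g : ι → ℝ := fun j => sin ((lvl j - 1) * θ) / (2 * sin (lvl j * θ)) * a j ^ 2
  have hf (i : ι) : 0 ≤ f i :=
    mul_nonneg (div_nonneg (sin_nonneg (by linarith [hlvl' i]) (by linarith [hlvl' i]))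
      (by linarith [sin_pos i])) (sq_nonneg _)
  have hg (j : ι) : 0 ≤ g j :=
    mul_nonneg (div_nonneg (sin_nonneg (by linarith [hlvl' j]) (by linarith [hlvl' j]))
      (by linarith [sin_pos j])) (sq_nonneg _)
  have hfg (i : ι) : f i + g i = cos θ * a i ^ 2 := by
    have := sin_pos i
    have hrec : sin ((lvl i + 1) * θ) + sin ((lvl i - 1) * θ) = 2 * cos θ * sin (lvl i * θ) := by
      rw [add_mul, sub_mul, one_mul, sin_add, sin_sub]; ring
    simp only [f, g]
    rw [← add_mul, ← add_div, hrec]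
    field_simp
  have hamgm (p) (hp : p ∈ S) : a p.1 * a p.2 ≤ f p.1 + g p.2 := by
    have hl : (lvl p.2 : ℝ) = lvl p.1 + 1 := by exact_mod_cast hS p hp
    have h1 := sin_pos p.1
    have h2 := sin_pos p.2
    have e1 : sin ((lvl p.1 + 1) * θ) = sin (lvl p.2 * θ) := by rw [hl]
    have e2 : sin ((lvl p.2 - 1) * θ) = sin (lvl p.1 * θ) := by rw [hl, add_sub_cancel_right]
    have hsq : f p.1 + g p.2 - a p.1 * a p.2 =
        (sin (lvl p.2 * θ) * a p.1 - sin (lvl p.1 * θ) * a p.2) ^ 2 /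
          (2 * sin (lvl p.1 * θ) * sin (lvl p.2 * θ)) := by
      simp only [f, g, e1, e2]
      generalize sin (lvl p.1 * θ) = u at h1 ⊢
      generalize sin (lvl p.2 * θ) = v at h2 ⊢
      field_simp
      ring
    have : 0 ≤ f p.1 + g p.2 - a p.1 * a p.2 := by rw [hsq]; positivity
    linarith
  calc ∑ p ∈ S, a p.1 * a p.2 ≤ ∑ p ∈ S, f p.1 + ∑ p ∈ S, g p.2 := by
        rw [← sum_add_distrib]; exact sum_le_sum hamgm
    _ = ∑ i ∈ S.image Prod.fst, f i + ∑ j ∈ S.image Prod.snd, g j := by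
        rw [sum_image hfst, sum_image hsnd]
    _ ≤ ∑ i, f i + ∑ j, g j :=
        add_le_add (sum_le_univ_sum_of_nonneg hf) (sum_le_univ_sum_of_nonneg hg)
    _ = cos θ * ∑ i, a i ^ 2 := by
        rw [← sum_add_distrib, mul_sum]
        exact sum_congr rfl fun i _ => hfg i

lemma numRange_subset_closedBall_of_graded {ι : Type*} [Fintype ι] [DecidableEq ι] {L : ℕ}
    (A : Matrix ι ι ℂ) (R : ι → ι → Prop) [DecidableRel R]
    (hA : ∀ i j, A i j = if R i j then 1 else 0) (hR : Relator.BiUnique R)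
    (lvl : ι → ℕ) (hlvl : ∀ i, lvl i ∈ Icc 1 L) (hRlvl : ∀ i j, R i j → lvl j = lvl i + 1) :
    numRange A ⊆ Metric.closedBall 0 (cos (π / (L + 1))) := by
  rintro _ ⟨x, hx, rfl⟩
  set S := univ.filter fun p : ι × ι => R p.1 p.2
  have hq : ⟪x, Matrix.toEuclideanLin A x⟫_ℂ = ∑ p ∈ S, star (x p.1) * x p.2 := by
    simp only [inner_toEuclideanLin_self, hA, S, sum_filter, ← Fintype.sum_prod_type']
    exact sum_congr rfl fun p _ => by split_ifs <;> simp
  have hfst : Set.InjOn Prod.fst (S : Set (ι × ι)) := fun p hp q hq h =>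
    Prod.ext h (hR.2 (by simpa [S] using hp) (by simpa [S, h] using hq))
  have hsnd : Set.InjOn Prod.snd (S : Set (ι × ι)) := fun p hp q hq h =>
    Prod.ext (hR.1 (by simpa [S] using hp) (by simpa [S, h] using hq)) h
  rw [Metric.mem_closedBall, dist_zero_right, hq]
  calc ‖∑ p ∈ S, star (x p.1) * x p.2‖ ≤ ∑ p ∈ S, ‖x p.1‖ * ‖x p.2‖ :=
        (norm_sum_le _ _).trans_eq (by simp)
    _ ≤ cos (π / (L + 1)) * ∑ i, ‖x i‖ ^ 2 :=
        sum_mul_le_cos_mul_sum_sq lvl hlvl S (fun p hp => hRlvl _ _ (by simpa [S] using hp))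
          hfst hsnd fun i => ‖x i‖
    _ = cos (π / (L + 1)) := by rw [← EuclideanSpace.norm_sq_eq, hx, one_pow, mul_one]

lemma sum_range_mul_eq_of_recurrence {s : ℕ → ℝ} {c : ℝ} {k : ℕ} (h0 : s 0 = 0)
    (hk : s (k + 1) = 0) (hrec : ∀ i, s (i + 2) + s i = 2 * c * s (i + 1)) :
    ∑ i ∈ range k, s (i + 1) * s (i + 2) = c * ∑ i ∈ range k, s (i + 1) ^ 2 := by
  have hshift : ∑ i ∈ range k, s i * s (i + 1) = ∑ i ∈ range k, s (i + 1) * s (i + 2) := by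
    have h1 := sum_range_succ (fun i => s i * s (i + 1)) k
    have h2 := sum_range_succ' (fun i => s i * s (i + 1)) k
    simp only [h0, hk, zero_mul, mul_zero, add_zero] at h1 h2
    exact h1.symm.trans h2
  have hexpand : 2 * c * ∑ i ∈ range k, s (i + 1) ^ 2 =
      ∑ i ∈ range k, s (i + 1) * s (i + 2) + ∑ i ∈ range k, s i * s (i + 1) := by
    rw [mul_sum, ← sum_add_distrib]
    exact sum_congr rfl fun i _ => by linear_combination -s (i + 1) * hrec i
  linarith

lemma cos_pi_div_succ_nonneg {k : ℕ} (hk : 1 ≤ k) : 0 ≤ cos (π / (k + 1)) := by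
  have : (2 : ℝ) ≤ k + 1 := by exact_mod_cast Nat.succ_le_succ hk
  refine cos_nonneg_of_mem_Icc ⟨?_, div_le_div_of_nonneg_left pi_pos.le two_pos this⟩
  linarith [pi_pos, div_pos pi_pos (by linarith : (0 : ℝ) < k + 1)]

lemma monotone_cos_pi_div_succ : Monotone fun k : ℕ => cos (π / (k + 1)) := by
  intro a b hab
  have : (a : ℝ) ≤ b := by exact_mod_cast hab
  refine cos_le_cos_of_nonneg_of_le_pi (by positivity) ?_ ?_
  · exact div_le_self pi_pos.le (by linarith [(Nat.cast_nonneg a : (0 : ℝ) ≤ a)])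
  · gcongr

lemma numRange_jordan_subset (k : ℕ) :
    numRange (Jordan k) ⊆ Metric.closedBall 0 (cos (π / (k + 1))) :=
  numRange_subset_closedBall_of_graded _ (fun i j : Fin k => (i : ℕ) + 1 = j) (fun _ _ => rfl)
    ⟨fun _ _ _ h h' => Fin.ext (by omega), fun _ _ _ h h' => Fin.ext (by omega)⟩
    (fun i => i + 1) (fun i => mem_Icc.2 ⟨le_add_self, i.isLt⟩) (fun _ _ h => by simp [h])

lemma inner_toEuclideanLin_jordan (k : ℕ) (a : ℕ → ℂ) (ha : a k = 0) :
    ⟪WithLp.toLp 2 (fun i : Fin k => a i),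
      Matrix.toEuclideanLin (Jordan k) (WithLp.toLp 2 fun i : Fin k => a i)⟫_ℂ =
      ∑ i ∈ range k, star (a i) * a (i + 1) := by
  simp only [inner_toEuclideanLin_self, Jordan]
  rw [Fin.sum_univ_eq_sum_range
    (fun i => ∑ j : Fin k, star (a i) * (if i + 1 = (j : ℕ) then 1 else 0) * a j)]
  refine sum_congr rfl fun i hi => ?_
  rw [Fin.sum_univ_eq_sum_range (fun j => star (a i) * (if i + 1 = j then 1 else 0) * a j)]
  simp only [mul_ite, ite_mul, mul_one, mul_zero, zero_mul, sum_ite_eq, mem_range]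
  split_ifs with h
  · rfl
  · rw [show i + 1 = k by simp at hi; omega, ha, mul_zero]

lemma cos_mem_numRange_jordan {k : ℕ} (hk : 1 ≤ k) :
    ((cos (π / (k + 1)) : ℝ) : ℂ) ∈ numRange (Jordan k) := by
  set θ := π / (k + 1)
  set s : ℕ → ℝ := fun t => sin (t * θ)
  set v : EuclideanSpace ℂ (Fin k) := WithLp.toLp 2 fun i => (s (i + 1) : ℂ)
  have hs0 : s 0 = 0 := by simp [s]
  have hsk : s (k + 1) = 0 := by simp [s, θ, mul_div_cancel₀ π (by positivity : (k + 1 : ℝ) ≠ 0)]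
  have hrec (i : ℕ) : s (i + 2) + s i = 2 * cos θ * s (i + 1) := by
    simp only [s]; push_cast
    rw [show ((i : ℝ) + 2) * θ = (i + 1) * θ + θ by ring,
      show (i : ℝ) * θ = (i + 1) * θ - θ by ring, sin_add, sin_sub]
    ring
  have hnorm : ‖v‖ ^ 2 = ∑ i ∈ range k, s (i + 1) ^ 2 := by
    rw [EuclideanSpace.norm_sq_eq, ← Fin.sum_univ_eq_sum_range (fun i => s (i + 1) ^ 2)]
    simp [v]
  have hv : v ≠ 0 := by
    intro h
    have hθπ : θ < π := div_lt_self pi_pos (by linarith [(Nat.one_le_cast.2 hk : (1 : ℝ) ≤ k)])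
    have hs1 : 0 < s 1 := by
      simp only [s, Nat.cast_one, one_mul]
      exact sin_pos_of_pos_of_lt_pi (by positivity) hθπ
    have : (s 1 : ℂ) = 0 := by simpa [v] using congrArg (fun x => x ⟨0, hk⟩) h
    exact hs1.ne' (by exact_mod_cast this)
  have hq : ⟪v, Matrix.toEuclideanLin (Jordan k) v⟫_ℂ = (cos θ : ℂ) * (‖v‖ : ℂ) ^ 2 := by
    rw [inner_toEuclideanLin_jordan k (fun t => (s (t + 1) : ℂ)) (by simp [hsk])]
    simp only [Complex.star_def, Complex.conj_ofReal]
    exact_mod_cast (sum_range_mul_eq_of_recurrence hs0 hsk hrec).trans (by rw [hnorm])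
  convert inner_div_norm_sq_mem_numRange (Jordan k) hv using 1
  rw [hq, mul_div_cancel_right₀ _ (by exact_mod_cast pow_ne_zero 2 (norm_ne_zero_iff.2 hv))]

lemma numRange_jordan {k : ℕ} (hk : 1 ≤ k) :
    numRange (Jordan k) = Metric.closedBall 0 (cos (π / (k + 1))) := by
  refine (numRange_jordan_subset k).antisymm fun z hz => ?_
  have : Nonempty (Fin k) := ⟨⟨0, hk⟩⟩
  have hzero : (0 : ℂ) ∈ numRange (Jordan k) := by
    simpa [Jordan] using diag_mem_numRange (Jordan k) ⟨0, hk⟩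
  obtain ⟨w, hw, hwz : ‖w‖ = ‖z‖⟩ := (isPreconnected_numRange (Jordan k)).intermediate_value hzero
    (cos_mem_numRange_jordan hk) continuous_norm.continuousOn
    (show ‖z‖ ∈ Set.Icc ‖(0 : ℂ)‖ ‖((cos (π / (k + 1)) : ℝ) : ℂ)‖ from ⟨by simp, by
      rw [Complex.norm_real, Real.norm_of_nonneg (cos_pi_div_succ_nonneg hk)]
      exact mem_closedBall_zero_iff.1 hz⟩)
  by_cases hw0 : w = 0
  · rw [hw0, norm_zero, eq_comm, norm_eq_zero] at hwz
    rwa [hwz]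
  · have : z / w * w = z := div_mul_cancel₀ z hw0
    rw [← this]
    refine mul_mem_numRange_of_graded _ (fun i : Fin k => (i : ℕ)) (fun i j h => ?_) ?_ hw
    · by_contra hij; exact h (by simp [Jordan, Ne.symm hij])
    · rw [norm_div, ← hwz, div_self (norm_ne_zero_iff.2 hw0)]

lemma numRadius_jordan {k : ℕ} (hk : 1 ≤ k) : numRadius (Jordan k) = cos (π / (k + 1)) :=
  numRadius_eq_of_numRange_eq_closedBall _ (cos_pi_div_succ_nonneg hk) (numRange_jordan hk)

lemma numRange_kronecker_jordan_subset (n m : ℕ) :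
    numRange (Jordan n ⊗ₖ Jordan m) ⊆ Metric.closedBall 0 (cos (π / (min n m + 1))) :=
  numRange_subset_closedBall_of_graded _
    (fun p q : Fin n × Fin m => (p.1 : ℕ) + 1 = q.1 ∧ (p.2 : ℕ) + 1 = q.2)
    (fun _ _ => by simp only [Matrix.kroneckerMap_apply, Jordan, ite_zero_mul_ite_zero, mul_one])
    ⟨fun _ _ _ h h' => Prod.ext (Fin.ext (by omega)) (Fin.ext (by omega)),
      fun _ _ _ h h' => Prod.ext (Fin.ext (by omega)) (Fin.ext (by omega))⟩
    (fun p => min (p.1 : ℕ) p.2 + 1)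
    (fun p => mem_Icc.2 ⟨le_add_self, by have := p.1.isLt; have := p.2.isLt; omega⟩)
    (fun _ _ h => by simp only [← h.1, ← h.2]; omega)

lemma jordan_min_eq_submatrix (n m : ℕ) :
    Jordan (min n m) = (Jordan n ⊗ₖ Jordan m).submatrix
      (fun i => (Fin.castLE (min_le_left n m) i, Fin.castLE (min_le_right n m) i))
      (fun i => (Fin.castLE (min_le_left n m) i, Fin.castLE (min_le_right n m) i)) := by
  ext i j
  simp [Jordan]

theorem stmt9 (n m : ℕ) (hn : 1 ≤ n) (hm : 1 ≤ m) :
    numRange (Jordan n ⊗ₖ Jordan m) = numRange (Jordan (min n m)) ∧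
      numRadius (Jordan n ⊗ₖ Jordan m) = Real.cos (Real.pi / (min n m + 1)) ∧
      numRadius (Jordan n ⊗ₖ Jordan m) = min (numRadius (Jordan n)) (numRadius (Jordan m)) := by
  have hmin : 1 ≤ min n m := le_min hn hm
  have hrange : numRange (Jordan n ⊗ₖ Jordan m) = numRange (Jordan (min n m)) := by
    refine ((numRange_kronecker_jordan_subset n m).trans (numRange_jordan hmin).ge).antisymm ?_
    rw [jordan_min_eq_submatrix]
    exact numRange_submatrix_subset _ fun i j h =>
      Fin.castLE_injective (min_le_left n m) (congrArg Prod.fst h)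
  have hradius : numRadius (Jordan n ⊗ₖ Jordan m) = cos (π / (min n m + 1)) :=
    numRadius_eq_of_numRange_eq_closedBall _ (cos_pi_div_succ_nonneg hmin)
      (hrange.trans (numRange_jordan hmin))
  refine ⟨hrange, hradius, ?_⟩
  rw [hradius, numRadius_jordan hn, numRadius_jordan hm]
  exact monotone_cos_pi_div_succ.map_min
end

section
/- If A is an n-by-n complex matrix with ‖A‖ = ‖A^k‖ = 1 for some k ≥ 1, then w(A) ≥ cos(π/(k+2)). -/
/-!
Pick `x` with `‖x‖ ≤ 1` and `‖Aᵏ x‖ = 1`; as `‖A‖ = 1`, the vectors `x, A x, …, Aᵏ x` are unit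
vectors. Put `N = k + 2`, `θ = π / N` and `s j = sin (j θ)`, so that `s 0 = s N = 0`, let `ζ` be a
primitive `N`-th root of unity and `y l = ∑ j < N, ζ ^ (l j) s (j + 1) Aʲ x`. Orthogonality of the
characters of `ℤ / N` kills every cross term `⟪Aⁱ x, Aʲ x⟫` with `i ≠ j`, which leaves
`∑ l, ‖y l‖² = N ∑ j, s (j + 1)²` and `∑ l, ζ ^ l ⟪y l, A y l⟫ = N ∑ j, s (j + 1) s j`.
Since `s (j + 1) + s (j - 1) = 2 cos θ s j`, the second sum is `cos θ` times the first, hence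
`cos θ ∑ ‖y l‖² ≤ ∑ |⟪y l, A y l⟫| ≤ w(A) ∑ ‖y l‖²`.
-/

open scoped Kronecker InnerProductSpace

open Finset ComplexConjugate

lemma IsPrimitiveRoot.sum_conj_pow_mul_pow {ζ : ℂ} {N : ℕ} (hζ : IsPrimitiveRoot ζ N)
    {i j : ℕ} (hi : i < N) (hj : j < N) :
    ∑ l ∈ range N, conj (ζ ^ (l * i)) * ζ ^ (l * j) = if i = j then (N : ℂ) else 0 := by
  have hconj : conj ζ * ζ = 1 := by
    rw [mul_comm, Complex.mul_conj, Complex.normSq_eq_norm_sq, hζ.norm'_eq_one (by omega)]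
    norm_num
  set z := conj ζ ^ i * ζ ^ j
  have hterm (l : ℕ) : conj (ζ ^ (l * i)) * ζ ^ (l * j) = z ^ l := by
    rw [map_pow, mul_pow, ← pow_mul, ← pow_mul, mul_comm i, mul_comm j]
  simp_rw [hterm]
  split_ifs with hij
  · subst hij
    simp [z, ← mul_pow, hconj]
  · have hz : z ≠ 1 := fun h ↦ hij <| hζ.pow_inj hi hj <| by
      have := congrArg (ζ ^ i * ·) h
      simp only [z, ← mul_assoc, ← mul_pow, mul_comm ζ, hconj, one_pow, one_mul, mul_one] at this
      exact this.symm
    rw [geom_sum_eq hz, mul_pow, ← pow_mul, ← pow_mul, mul_comm i, mul_comm j, pow_mul, pow_mul,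
      ← map_pow, hζ.pow_eq_one]
    simp

open Real in
lemma sum_range_sin_succ_mul_sin (θ : ℝ) {N : ℕ} (h : sin (N * θ) = 0) :
    ∑ j ∈ range N, sin ((j + 1) * θ) * sin (j * θ) =
      cos θ * ∑ j ∈ range N, sin ((j + 1) * θ) ^ 2 := by
  set f : ℕ → ℝ := fun j ↦ sin ((j + 1) * θ) * sin (j * θ)
  have hshift : ∑ j ∈ range N, f (j + 1) = ∑ j ∈ range N, f j := by
    have h0 : f 0 = 0 := by simp [f]
    have hN : f N = 0 := by simp [f, h]
    linarith [sum_range_succ' f N, sum_range_succ f N]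
  have hrec (j : ℕ) : sin ((j + 1 + 1) * θ) + sin (j * θ) = 2 * cos θ * sin ((j + 1) * θ) := by
    rw [show ((j : ℝ) + 1 + 1) * θ = (j + 1) * θ + θ by ring,
      show (j : ℝ) * θ = (j + 1) * θ - θ by ring, sin_add, sin_sub]
    ring
  have hdouble : 2 * (cos θ * ∑ j ∈ range N, sin ((j + 1) * θ) ^ 2) =
      ∑ j ∈ range N, f (j + 1) + ∑ j ∈ range N, f j := by
    simp only [mul_sum, ← sum_add_distrib, f]
    refine sum_congr rfl fun j _ ↦ ?_
    push_cast
    linear_combination (-sin ((j + 1) * θ)) * hrec j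
  linarith

open Real in
lemma sum_range_sin_succ_sq_pos {θ : ℝ} (hθ₀ : 0 < θ) (hθπ : θ < π) {N : ℕ} (hN : 0 < N) :
    0 < ∑ j ∈ range N, sin ((j + 1) * θ) ^ 2 := by
  have h0 := single_le_sum (f := fun j : ℕ ↦ sin ((j + 1) * θ) ^ 2) (fun j _ ↦ sq_nonneg _)
    (mem_range.2 hN)
  simp only [Nat.cast_zero, zero_add, one_mul] at h0
  exact (pow_pos (sin_pos_of_pos_of_lt_pi hθ₀ hθπ) 2).trans_le h0

lemma ContinuousLinearMap.antitone_norm_pow_apply {𝕜 F : Type*} [NontriviallyNormedField 𝕜]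
    [SeminormedAddCommGroup F] [NormedSpace 𝕜 F] {T : F →L[𝕜] F} (hT : ‖T‖ ≤ 1) (x : F) :
    Antitone fun j : ℕ ↦ ‖(T ^ j) x‖ :=
  antitone_nat_of_succ_le fun j ↦ by
    rw [pow_succ', mul_apply_eq_comp]
    exact (T.le_of_opNorm_le hT _).trans_eq (one_mul _)

lemma ContinuousLinearMap.exists_mem_closedBall_norm_apply_eq {𝕜 F G : Type*}
    [DenselyNormedField 𝕜] [NormedAddCommGroup F] [NormedSpace 𝕜 F] [ProperSpace F]
    [SeminormedAddCommGroup G] [NormedSpace 𝕜 G] (f : F →L[𝕜] G) :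
    ∃ x ∈ Metric.closedBall (0 : F) 1, ‖f x‖ = ‖f‖ := by
  have hK : IsCompact ((fun x ↦ ‖f x‖) '' Metric.closedBall (0 : F) 1) :=
    (isCompact_closedBall (0 : F) 1).image (continuous_norm.comp f.continuous)
  obtain ⟨x, hx, hfx⟩ := hK.sSup_mem ((Metric.nonempty_closedBall.2 zero_le_one).image _)
  exact ⟨x, hx, hfx.trans f.sSup_unitClosedBall_eq_norm⟩

section InnerProductSpace

variable {E : Type*} [NormedAddCommGroup E] [InnerProductSpace ℂ E]

lemma IsPrimitiveRoot.sum_inner_sum_pow_smul {ζ : ℂ} {N : ℕ} (hζ : IsPrimitiveRoot ζ N)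
    (a b : ℕ → E) :
    ∑ l ∈ range N, ⟪∑ i ∈ range N, ζ ^ (l * i) • a i, ∑ j ∈ range N, ζ ^ (l * j) • b j⟫_ℂ =
      N * ∑ i ∈ range N, ⟪a i, b i⟫_ℂ := by
  calc _ = ∑ l ∈ range N, ∑ i ∈ range N, ∑ j ∈ range N,
        conj (ζ ^ (l * i)) * ζ ^ (l * j) * ⟪a i, b j⟫_ℂ := by
        simp_rw [sum_inner, inner_smul_left, inner_sum, inner_smul_right, mul_sum, mul_assoc]
    _ = ∑ i ∈ range N, ∑ j ∈ range N,
        (∑ l ∈ range N, conj (ζ ^ (l * i)) * ζ ^ (l * j)) * ⟪a i, b j⟫_ℂ := by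
        simp only [sum_mul]
        rw [sum_comm]
        exact sum_congr rfl fun i _ ↦ sum_comm
    _ = ∑ i ∈ range N, ∑ j ∈ range N, (if i = j then (N : ℂ) else 0) * ⟪a i, b j⟫_ℂ :=
        sum_congr rfl fun i hi ↦ sum_congr rfl fun j hj ↦ by
          rw [hζ.sum_conj_pow_mul_pow (mem_range.1 hi) (mem_range.1 hj)]
    _ = N * ∑ i ∈ range N, ⟪a i, b i⟫_ℂ := by
        simp +contextual [ite_mul, mul_sum]

noncomputable def orbitDFT (T : E →L[ℂ] E) (x : E) (ζ : ℂ) (N : ℕ) (c : ℕ → ℝ) (l : ℕ) : E :=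
  ∑ j ∈ range N, ζ ^ (l * j) • ((c j : ℂ) • (T ^ j) x)

section orbitDFT

variable {T : E →L[ℂ] E} {x : E} {ζ : ℂ} {N : ℕ}

lemma IsPrimitiveRoot.sum_inner_orbitDFT (hζ : IsPrimitiveRoot ζ N) {c : ℕ → ℝ}
    (hc : ∀ j < N, c j ≠ 0 → ‖(T ^ j) x‖ = 1) (d : ℕ → ℝ) :
    ∑ l ∈ range N, ⟪orbitDFT T x ζ N c l, orbitDFT T x ζ N d l⟫_ℂ =
      ((N * ∑ j ∈ range N, c j * d j : ℝ) : ℂ) := by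
  simp only [orbitDFT]
  rw [hζ.sum_inner_sum_pow_smul, Complex.ofReal_mul, Complex.ofReal_natCast, Complex.ofReal_sum]
  congr 1
  refine sum_congr rfl fun j hj ↦ ?_
  rw [inner_smul_left, inner_smul_right, Complex.conj_ofReal, Complex.ofReal_mul]
  rcases eq_or_ne (c j) 0 with h | h
  · simp [h]
  · rw [inner_self_eq_norm_sq_to_K, hc j (mem_range.1 hj) h]
    simp

/-- `T` shifts the orbit by one step and `ζ ^ l` absorbs the resulting phase; since `s` vanishes
at both ends, the shifted sum runs over the same range. -/
lemma smul_apply_orbitDFT {s : ℕ → ℝ} (h0 : s 0 = 0) (hN : s N = 0) (l : ℕ) :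
    ζ ^ l • T (orbitDFT T x ζ N (fun j ↦ s (j + 1)) l) = orbitDFT T x ζ N s l := by
  set f : ℕ → E := fun j ↦ ζ ^ (l * j) • ((s j : ℂ) • (T ^ j) x)
  have hshift := sum_range_succ' f N
  rw [sum_range_succ, show f 0 = 0 by simp [f, h0], show f N = 0 by simp [f, hN], add_zero,
    add_zero] at hshift
  rw [orbitDFT, orbitDFT, hshift]
  simp only [f, map_sum, map_smul, smul_sum, smul_smul, pow_succ', mul_apply_eq_comp]
  refine sum_congr rfl fun j _ ↦ ?_
  congr 1
  ring

end orbitDFT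

open Real in
theorem cos_pi_div_le_of_norm_pow_apply_eq_one {T : E →L[ℂ] E} {x : E} {k : ℕ} {w : ℝ}
    (hx : ∀ j ≤ k, ‖(T ^ j) x‖ = 1) (hw : ∀ y, ‖⟪y, T y⟫_ℂ‖ ≤ w * ‖y‖ ^ 2) :
    cos (π / (k + 2)) ≤ w := by
  set N := k + 2
  set θ := π / N
  set s : ℕ → ℝ := fun j ↦ sin (j * θ)
  have hsN : s N = 0 := by
    simp only [s, θ]
    rw [mul_div_cancel₀ _ (by positivity), sin_pi]
  obtain ⟨ζ, hζ⟩ : ∃ ζ : ℂ, IsPrimitiveRoot ζ N := ⟨_, Complex.isPrimitiveRoot_exp N (by omega)⟩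
  set y := orbitDFT T x ζ N fun j ↦ s (j + 1)
  -- `(T ^ (k + 1)) x`, whose norm is unknown, enters `y` with the coefficient `s N = 0`.
  have hunit : ∀ j < N, s (j + 1) ≠ 0 → ‖(T ^ j) x‖ = 1 := fun j hj hs ↦
    hx j (by by_contra! h; exact hs (by rwa [show j + 1 = N by omega]))
  have hnorm : ∑ l ∈ range N, ‖y l‖ ^ 2 = N * ∑ j ∈ range N, s (j + 1) ^ 2 := by
    have := congrArg Complex.re (hζ.sum_inner_orbitDFT hunit fun j ↦ s (j + 1))
    simp only [Complex.re_sum, Complex.ofReal_re, ← pow_two] at this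
    rw [← this]
    exact sum_congr rfl fun l _ ↦ (inner_self_eq_norm_sq (𝕜 := ℂ) _).symm
  have hre : ∑ l ∈ range N, (⟪y l, ζ ^ l • T (y l)⟫_ℂ).re =
      N * ∑ j ∈ range N, s (j + 1) * s j := by
    simp only [y, smul_apply_orbitDFT (by simp [s]) hsN, ← Complex.re_sum,
      hζ.sum_inner_orbitDFT hunit, Complex.ofReal_re]
  set S := ∑ j ∈ range N, s (j + 1) ^ 2
  have hpos : 0 < N * S := by
    refine mul_pos (Nat.cast_pos.2 (by omega)) ?_
    simpa only [S, s, Nat.cast_succ] using sum_range_sin_succ_sq_pos (by positivity)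
      (div_lt_self pi_pos (by simp [N]; linarith)) (show 0 < N by omega)
  have key : cos θ * (N * S) ≤ w * (N * S) :=
    calc _ = N * ∑ j ∈ range N, s (j + 1) * s j := by
          have htrig := sum_range_sin_succ_mul_sin θ hsN
          simp only [S, s, Nat.cast_succ] at htrig ⊢
          rw [htrig]
          ring
      _ = ∑ l ∈ range N, (⟪y l, ζ ^ l • T (y l)⟫_ℂ).re := hre.symm
      _ ≤ ∑ l ∈ range N, ‖⟪y l, T (y l)⟫_ℂ‖ := sum_le_sum fun l _ ↦ by
          refine (Complex.re_le_norm _).trans_eq ?_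
          rw [inner_smul_right, norm_mul, norm_pow, hζ.norm'_eq_one (by omega), one_pow, one_mul]
      _ ≤ ∑ l ∈ range N, w * ‖y l‖ ^ 2 := sum_le_sum fun l _ ↦ hw (y l)
      _ = w * (N * S) := by rw [← mul_sum, hnorm]
  have hθ : cos θ = cos (π / (k + 2)) := by simp [θ, N]
  rw [← hθ]
  exact le_of_mul_le_mul_right key hpos

end InnerProductSpace

lemma norm_inner_toEuclideanCLM_le_numRadius_mul {n : Type*} [Fintype n] [DecidableEq n]
    (A : Matrix n n ℂ) (y : EuclideanSpace ℂ n) :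
    ‖⟪y, Matrix.toEuclideanCLM (𝕜 := ℂ) A y⟫_ℂ‖ ≤ numRadius A * ‖y‖ ^ 2 := by
  change ‖⟪y, Matrix.toEuclideanLin A y⟫_ℂ‖ ≤ _
  rcases eq_or_ne y 0 with rfl | hy
  · simp
  have hbdd : BddAbove {r : ℝ | ∃ x : EuclideanSpace ℂ n, ‖x‖ = 1 ∧
      r = ‖⟪x, Matrix.toEuclideanLin A x⟫_ℂ‖} := by
    refine ⟨opNorm A, ?_⟩
    rintro - ⟨x, hx, rfl⟩
    calc _ ≤ ‖x‖ * ‖Matrix.toEuclideanCLM (𝕜 := ℂ) A x‖ := norm_inner_le_norm _ _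
      _ ≤ ‖x‖ * (opNorm A * ‖x‖) := by gcongr; exact ContinuousLinearMap.le_opNorm _ _
      _ = opNorm A := by rw [hx]; ring
  have hy' : 0 < ‖y‖ := norm_pos_iff.2 hy
  set u : EuclideanSpace ℂ n := ((‖y‖⁻¹ : ℝ) : ℂ) • y
  have hu : ‖u‖ = 1 := by
    simp [u, norm_smul, hy'.ne']
  have hmem := le_csSup hbdd ⟨u, hu, rfl⟩
  have hinner : ‖⟪u, Matrix.toEuclideanLin A u⟫_ℂ‖ =
      ‖⟪y, Matrix.toEuclideanLin A y⟫_ℂ‖ / ‖y‖ ^ 2 := by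
    simp only [u, map_smul, inner_smul_left, inner_smul_right, Complex.conj_ofReal, norm_mul,
      Complex.norm_real, norm_inv, norm_norm]
    ring
  rw [← div_le_iff₀ (by positivity), ← hinner]
  exact hmem

theorem stmt10_general (n k : ℕ) (A : Matrix (Fin n) (Fin n) ℂ)
    (h1 : opNorm A = 1) (h2 : opNorm (A ^ k) = 1) :
    Real.cos (Real.pi / (k + 2)) ≤ numRadius A := by
  set T := Matrix.toEuclideanCLM (𝕜 := ℂ) A
  have hTk : ‖T ^ k‖ = 1 := by rw [← map_pow]; exact h2
  obtain ⟨x, hx, hxk⟩ := (T ^ k).exists_mem_closedBall_norm_apply_eq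
  have hanti := T.antitone_norm_pow_apply h1.le x
  have hchain (j : ℕ) (hj : j ≤ k) : ‖(T ^ j) x‖ = 1 :=
    le_antisymm ((hanti (Nat.zero_le j)).trans (by simpa using hx))
      ((hxk.trans hTk).symm.le.trans (hanti hj))
  exact cos_pi_div_le_of_norm_pow_apply_eq_one hchain
    (norm_inner_toEuclideanCLM_le_numRadius_mul A)

theorem stmt10 (n k : ℕ) (hk : 1 ≤ k) (A : Matrix (Fin n) (Fin n) ℂ)
    (h1 : opNorm A = 1) (h2 : opNorm (A ^ k) = 1) :
    Real.cos (Real.pi / (k + 2)) ≤ numRadius A :=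
  stmt10_general n k A h1 h2
end

section
/- Let A be an n-by-n complex matrix with ‖A‖ = 1 such that ‖A^k‖ = 1 and A^{k+1} = 0, where k = sup{j : ‖A^j‖ = 1} = sup{j : A^j ≠ 0} < ∞. Then A is unitarily similar to J_{k+1} ⊕ B where B^{k+1} = 0. -/
/-! Let `T` be the operator of `A` and choose a unit vector `x` with `‖T ^ k x‖ = 1`. As
`‖T‖ ≤ 1`, all of `x, T x, …, T ^ k x` are unit vectors, and a contraction preserving the norm of
`v` satisfies `T† (T v) = v`; so `T†` walks the chain back down, and
`T† x = (T†) ^ (k + 1) (T ^ k x) = 0` because `T ^ (k + 1) = 0`. Hence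
`⟪T ^ a x, T ^ c x⟫ = ⟪(T†) ^ c (T ^ a x), x⟫ = 0` for `a < c`: the chain is orthonormal, its span
is invariant under `T` and `T†`, and `T` acts on it as the Jordan block. Extending the chain to an
orthonormal basis makes the matrix of `T` block diagonal. -/

open scoped Kronecker InnerProductSpace

open ContinuousLinearMap Submodule Set Module

namespace ContinuousLinearMap

section NormedSpace

variable {𝕜 E : Type*} [NontriviallyNormedField 𝕜] [SeminormedAddCommGroup E] [NormedSpace 𝕜 E]
  {T : E →L[𝕜] E}

theorem norm_pow_apply_le (hT : ‖T‖ ≤ 1) (v : E) : ∀ m : ℕ, ‖(T ^ m) v‖ ≤ ‖v‖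
  | 0 => by rw [pow_zero, one_apply_eq_self]
  | m + 1 => by
    rw [pow_succ, mul_apply_eq_comp]
    exact (norm_pow_apply_le hT _ m).trans ((T.le_of_opNorm_le hT v).trans_eq (one_mul _))

theorem norm_pow_apply_eq_of_le {k : ℕ} {x : E} (hT : ‖T‖ ≤ 1) (hxk : ‖(T ^ k) x‖ = ‖x‖)
    {j : ℕ} (hj : j ≤ k) : ‖(T ^ j) x‖ = ‖x‖ := by
  refine le_antisymm (norm_pow_apply_le hT x j) ?_
  calc ‖x‖ = ‖(T ^ (k - j)) ((T ^ j) x)‖ := by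
        rw [← mul_apply_eq_comp, ← pow_add, Nat.sub_add_cancel hj, hxk]
    _ ≤ ‖(T ^ j) x‖ := norm_pow_apply_le hT _ _

end NormedSpace

theorem exists_norm_eq_one_norm_apply_eq {𝕜 E F : Type*} [RCLike 𝕜]
    [NormedAddCommGroup E] [NormedSpace 𝕜 E] [FiniteDimensional 𝕜 E] [Nontrivial E]
    [SeminormedAddCommGroup F] [NormedSpace 𝕜 F] (f : E →L[𝕜] F) :
    ∃ x, ‖x‖ = 1 ∧ ‖f x‖ = ‖f‖ := by
  have := FiniteDimensional.proper_rclike 𝕜 E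
  obtain ⟨v, hv⟩ := exists_ne (0 : E)
  have hne : (Metric.sphere (0 : E) 1).Nonempty :=
    ⟨_, mem_sphere_zero_iff_norm.mpr (norm_smul_inv_norm (𝕜 := 𝕜) hv)⟩
  obtain ⟨x, hx, hfx⟩ :=
    ((isCompact_sphere (0 : E) 1).image f.continuous.norm).sSup_mem (hne.image _)
  exact ⟨x, mem_sphere_zero_iff_norm.mp hx, hfx.trans f.sSup_sphere_eq_norm⟩

end ContinuousLinearMap

section InnerProductSpace

variable {𝕜 E : Type*} [RCLike 𝕜] [NormedAddCommGroup E] [InnerProductSpace 𝕜 E]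

theorem ContinuousLinearMap.adjoint_apply_apply_of_norm_apply_eq [CompleteSpace E]
    {T : E →L[𝕜] E} (hT : ‖T‖ ≤ 1) {v : E} (hv : ‖T v‖ = ‖v‖) : adjoint T (T v) = v := by
  set u := adjoint T (T v)
  have hvu : ⟪v, u⟫_𝕜 = (‖v‖ : 𝕜) ^ 2 := by
    rw [adjoint_inner_right, inner_self_eq_norm_sq_to_K, hv]
  have hu : ‖u‖ ≤ ‖v‖ := by
    refine ((adjoint T).le_of_opNorm_le ?_ _).trans_eq (by rw [one_mul, hv])
    rwa [LinearIsometryEquiv.norm_map]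
  have hdist : ‖v - u‖ ^ 2 ≤ 0 := by
    rw [@norm_sub_sq 𝕜, hvu, ← RCLike.ofReal_pow, RCLike.ofReal_re]
    nlinarith [norm_nonneg u]
  exact (sub_eq_zero.mp (norm_eq_zero.mp (by nlinarith [norm_nonneg (v - u)]))).symm

theorem Orthonormal.exists_orthonormalBasis_sum [FiniteDimensional 𝕜 E] {ι : Type*}
    [Fintype ι] {f : ι → E} (hf : Orthonormal 𝕜 f) {m : ℕ}
    (hm : Fintype.card ι + m = finrank 𝕜 E) :
    ∃ b : OrthonormalBasis (ι ⊕ Fin m) 𝕜 E, ∀ i, b (Sum.inl i) = f i := by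
  have hrestrict : (range Sum.inl).domRestrict (Sum.elim f 0 : ι ⊕ Fin m → E) =
      f ∘ (Equiv.ofInjective _ Sum.inl_injective).symm := by
    ext ⟨_, i, rfl⟩
    simp [Set.domRestrict]
  obtain ⟨b, hb⟩ := Orthonormal.exists_orthonormalBasis_extension_of_card_eq
    (by simpa [eq_comm] using hm) (hrestrict ▸ hf.comp _ (Equiv.injective _))
  exact ⟨b, fun i => hb _ (mem_range_self i)⟩

theorem OrthonormalBasis.toMatrix_eq_fromBlocks [CompleteSpace E] {ι κ : Type*}
    [Fintype ι] [Fintype κ] [DecidableEq ι] [DecidableEq κ] (b : OrthonormalBasis (ι ⊕ κ) 𝕜 E)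
    (T : E →L[𝕜] E) (hT : ∀ j, T (b (Sum.inl j)) ∈ span 𝕜 (range (b ∘ Sum.inl)))
    (hT' : ∀ j, adjoint T (b (Sum.inl j)) ∈ span 𝕜 (range (b ∘ Sum.inl))) :
    LinearMap.toMatrix b.toBasis b.toBasis T =
      Matrix.fromBlocks (Matrix.of fun i j => ⟪b (Sum.inl i), T (b (Sum.inl j))⟫_𝕜) 0 0
        (Matrix.of fun i j => ⟪b (Sum.inr i), T (b (Sum.inr j))⟫_𝕜) := by
  have hM : ∀ i, span 𝕜 (range (b ∘ Sum.inl)) ≤ (𝕜 ∙ b (Sum.inr i))ᗮ := fun i =>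
    span_le.mpr <| range_subset_iff.mpr fun j =>
      mem_orthogonal_singleton_iff_inner_left.mpr (b.orthonormal.2 Sum.inl_ne_inr)
  ext (i | i) (j | j) <;>
    simp only [LinearMap.toMatrix_apply, OrthonormalBasis.coe_toBasis_repr_apply,
      OrthonormalBasis.coe_toBasis, b.repr_apply_apply, Matrix.fromBlocks_apply₁₁,
      Matrix.fromBlocks_apply₁₂, Matrix.fromBlocks_apply₂₁, Matrix.fromBlocks_apply₂₂,
      Matrix.of_apply, Matrix.zero_apply, coe_coe]
  · rw [← adjoint_inner_left]
    exact mem_orthogonal_singleton_iff_inner_left.mp (hM j (hT' i))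
  · exact mem_orthogonal_singleton_iff_inner_right.mp (hM i (hT j))

end InnerProductSpace

namespace ContinuousLinearMap

variable {𝕜 E : Type*} [RCLike 𝕜] [NormedAddCommGroup E] [InnerProductSpace 𝕜 E]
  {T : E →L[𝕜] E} {k : ℕ} {x : E}

/-- Listed from `T ^ k x` down to `x`, so that `T` acts on it as `Jordan (k + 1)`. -/
def jordanChain (T : E →L[𝕜] E) (k : ℕ) (x : E) (j : Fin (k + 1)) : E :=
  (T ^ (k - j : ℕ)) x

theorem pow_apply_mem_span_jordanChain (hTk : T ^ (k + 1) = 0) (m : ℕ) :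
    (T ^ m) x ∈ span 𝕜 (range (jordanChain T k x)) := by
  rcases le_or_gt m k with hmk | hkm
  · refine subset_span ⟨⟨k - m, by omega⟩, ?_⟩
    rw [jordanChain, Nat.sub_sub_self hmk]
  · rw [pow_eq_zero_of_le hkm hTk, zero_apply]
    exact zero_mem _

theorem apply_jordanChain_mem_span (hTk : T ^ (k + 1) = 0) (j : Fin (k + 1)) :
    T (jordanChain T k x j) ∈ span 𝕜 (range (jordanChain T k x)) := by
  rw [jordanChain, ← mul_apply_eq_comp, ← pow_succ']
  exact pow_apply_mem_span_jordanChain hTk _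

variable [CompleteSpace E]

theorem adjoint_apply_pow_succ_apply (hT : ‖T‖ ≤ 1) (hxk : ‖(T ^ k) x‖ = ‖x‖) {j : ℕ}
    (hj : j < k) : adjoint T ((T ^ (j + 1)) x) = (T ^ j) x := by
  rw [pow_succ', mul_apply_eq_comp]
  refine adjoint_apply_apply_of_norm_apply_eq hT ?_
  rw [← mul_apply_eq_comp, ← pow_succ', norm_pow_apply_eq_of_le hT hxk hj,
    norm_pow_apply_eq_of_le hT hxk hj.le]

theorem adjoint_pow_apply_pow_apply (hT : ‖T‖ ≤ 1) (hxk : ‖(T ^ k) x‖ = ‖x‖) {j : ℕ}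
    (hj : j ≤ k) : (adjoint T ^ j) ((T ^ j) x) = x := by
  induction j with
  | zero => simp
  | succ j ih =>
    rw [pow_succ, mul_apply_eq_comp, adjoint_apply_pow_succ_apply hT hxk hj, ih (by omega)]

theorem adjoint_apply_eq_zero (hT : ‖T‖ ≤ 1) (hTk : T ^ (k + 1) = 0)
    (hxk : ‖(T ^ k) x‖ = ‖x‖) : adjoint T x = 0 := by
  have hS : adjoint T ^ (k + 1) = 0 := by rw [← star_eq_adjoint, ← star_pow, hTk, star_zero]
  calc adjoint T x = (adjoint T ^ (k + 1)) ((T ^ k) x) := by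
        rw [pow_succ', mul_apply_eq_comp, adjoint_pow_apply_pow_apply hT hxk le_rfl]
    _ = 0 := by rw [hS, zero_apply]

theorem inner_pow_apply_pow_apply_of_lt (hT : ‖T‖ ≤ 1) (hTk : T ^ (k + 1) = 0)
    (hxk : ‖(T ^ k) x‖ = ‖x‖) {a c : ℕ} (hac : a < c) : ⟪(T ^ a) x, (T ^ c) x⟫_𝕜 = 0 := by
  rcases le_or_gt c k with hck | hkc
  · obtain ⟨d, rfl⟩ := Nat.exists_eq_add_of_lt hac
    have hS : adjoint (T ^ (a + d + 1)) = adjoint T ^ d * adjoint T * adjoint T ^ a := by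
      rw [← star_eq_adjoint, star_pow, star_eq_adjoint, ← pow_succ, ← pow_add]
      congr 1
      omega
    rw [← adjoint_inner_left, hS, mul_apply_eq_comp, adjoint_pow_apply_pow_apply hT hxk (by omega),
      mul_apply_eq_comp, adjoint_apply_eq_zero hT hTk hxk, map_zero, inner_zero_left]
  · rw [pow_eq_zero_of_le hkc hTk, zero_apply, inner_zero_right]

theorem inner_pow_apply_pow_apply (hT : ‖T‖ ≤ 1) (hTk : T ^ (k + 1) = 0) (hx : ‖x‖ = 1)
    (hxk : ‖(T ^ k) x‖ = 1) (a c : ℕ) :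
    ⟪(T ^ a) x, (T ^ c) x⟫_𝕜 = if a = c ∧ a ≤ k then 1 else 0 := by
  have hxk' : ‖(T ^ k) x‖ = ‖x‖ := hxk.trans hx.symm
  rcases lt_trichotomy a c with hac | rfl | hca
  · rw [inner_pow_apply_pow_apply_of_lt hT hTk hxk' hac, if_neg (by omega)]
  · split_ifs with h
    · rw [inner_self_eq_norm_sq_to_K, norm_pow_apply_eq_of_le hT hxk' h.2, hx]
      simp
    · rw [pow_eq_zero_of_le (by omega) hTk, zero_apply, inner_zero_left]
  · rw [← inner_conj_symm, inner_pow_apply_pow_apply_of_lt hT hTk hxk' hca, map_zero,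
      if_neg (by omega)]

theorem orthonormal_jordanChain (hT : ‖T‖ ≤ 1) (hTk : T ^ (k + 1) = 0) (hx : ‖x‖ = 1)
    (hxk : ‖(T ^ k) x‖ = 1) : Orthonormal 𝕜 (jordanChain T k x) := by
  rw [orthonormal_iff_ite]
  intro i j
  rw [jordanChain, jordanChain, inner_pow_apply_pow_apply hT hTk hx hxk]
  exact if_congr (by omega) rfl rfl

theorem inner_jordanChain_apply_jordanChain (hT : ‖T‖ ≤ 1) (hTk : T ^ (k + 1) = 0)
    (hx : ‖x‖ = 1) (hxk : ‖(T ^ k) x‖ = 1) (i j : Fin (k + 1)) :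
    ⟪jordanChain T k x i, T (jordanChain T k x j)⟫_𝕜 = if (i : ℕ) + 1 = j then 1 else 0 := by
  rw [jordanChain, jordanChain, ← mul_apply_eq_comp, ← pow_succ',
    inner_pow_apply_pow_apply hT hTk hx hxk]
  exact if_congr (by omega) rfl rfl

theorem adjoint_apply_jordanChain_mem_span (hT : ‖T‖ ≤ 1) (hTk : T ^ (k + 1) = 0)
    (hxk : ‖(T ^ k) x‖ = ‖x‖) (j : Fin (k + 1)) :
    adjoint T (jordanChain T k x j) ∈ span 𝕜 (range (jordanChain T k x)) := by
  rw [jordanChain]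
  rcases h : k - (j : ℕ) with _ | i
  · rw [pow_zero, one_apply_eq_self, adjoint_apply_eq_zero hT hTk hxk]
    exact zero_mem _
  · rw [adjoint_apply_pow_succ_apply hT hxk (by omega)]
    exact pow_apply_mem_span_jordanChain hTk i

end ContinuousLinearMap

theorem unitSim_toMatrix {n ι : Type*} [Fintype n] [DecidableEq n] [Fintype ι] [DecidableEq ι]
    (A : Matrix n n ℂ) (b : OrthonormalBasis ι ℂ (EuclideanSpace ℂ n)) :
    UnitSim A (LinearMap.toMatrix b.toBasis b.toBasis (Matrix.toEuclideanLin A)) := by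
  refine ⟨b.repr, fun v => ?_⟩
  have hrepr : ⇑(b.toBasis.repr v) = b.repr v := funext (b.coe_toBasis_repr_apply v)
  ext i
  simpa [Matrix.toLpLin_apply, hrepr] using
    congr_fun (LinearMap.toMatrix_mulVec_repr b.toBasis b.toBasis (Matrix.toEuclideanLin A) v) i

theorem exists_orthonormalBasis_toMatrix_eq_fromBlocks_jordan {E : Type*} [NormedAddCommGroup E]
    [InnerProductSpace ℂ E] [FiniteDimensional ℂ E] {T : E →L[ℂ] E} {k : ℕ} (hT : ‖T‖ ≤ 1)
    (hTk : T ^ (k + 1) = 0) (hTk' : ‖T ^ k‖ = 1) :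
    ∃ (b : OrthonormalBasis (Fin (k + 1) ⊕ Fin (finrank ℂ E - (k + 1))) ℂ E)
      (B : Matrix (Fin (finrank ℂ E - (k + 1))) (Fin (finrank ℂ E - (k + 1))) ℂ),
      LinearMap.toMatrix b.toBasis b.toBasis T = Matrix.fromBlocks (Jordan (k + 1)) 0 0 B := by
  have : Nontrivial E := by
    by_contra h
    rw [not_nontrivial_iff_subsingleton] at h
    simp [Subsingleton.elim (T ^ k) 0] at hTk'
  obtain ⟨x, hx, hxk⟩ := (T ^ k).exists_norm_eq_one_norm_apply_eq
  rw [hTk'] at hxk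
  have hf := orthonormal_jordanChain hT hTk hx hxk
  have hk : k + 1 ≤ finrank ℂ E := by
    simpa using hf.linearIndependent.fintype_card_le_finrank
  obtain ⟨b, hb⟩ := hf.exists_orthonormalBasis_sum (m := finrank ℂ E - (k + 1))
    (by rw [Fintype.card_fin]; omega)
  have hbf : b ∘ Sum.inl = jordanChain T k x := funext hb
  refine ⟨b, Matrix.of fun i j => ⟪b (Sum.inr i), T (b (Sum.inr j))⟫_ℂ, ?_⟩
  rw [b.toMatrix_eq_fromBlocks T (by simpa [hb, hbf] using apply_jordanChain_mem_span hTk)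
    (by simpa [hb, hbf] using adjoint_apply_jordanChain_mem_span hT hTk (hxk.trans hx.symm))]
  congr
  ext i j
  rw [Matrix.of_apply, hb, hb, inner_jordanChain_apply_jordanChain hT hTk hx hxk]
  rfl

theorem stmt13_general (n k : ℕ) (A : Matrix (Fin n) (Fin n) ℂ)
    (h1 : opNorm A = 1) (h2 : opNorm (A ^ k) = 1) (h3 : A ^ (k + 1) = 0) :
    ∃ B : Matrix (Fin (n - (k + 1))) (Fin (n - (k + 1))) ℂ, B ^ (k + 1) = 0 ∧
      UnitSim A (Matrix.fromBlocks (Jordan (k + 1)) 0 0 B) := by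
  set T := Matrix.toEuclideanCLM (𝕜 := ℂ) A
  have hTk : T ^ (k + 1) = 0 := by rw [← map_pow, h3, map_zero]
  have key := exists_orthonormalBasis_toMatrix_eq_fromBlocks_jordan (T := T) h1.le hTk
    (by rw [← map_pow]; exact h2)
  rw [finrank_euclideanSpace_fin] at key
  obtain ⟨b, B, hb⟩ := key
  refine ⟨B, ?_, ?_⟩
  · have hpow : Matrix.fromBlocks (Jordan (k + 1) ^ (k + 1)) 0 0 (B ^ (k + 1)) =
        Matrix.fromBlocks 0 0 0 0 := by
      rw [← Matrix.fromBlocks_diagonal_pow, ← hb, LinearMap.toMatrix_pow, ← toLinearMap_pow, hTk,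
        toLinearMap_zero, map_zero, Matrix.fromBlocks_zero]
    exact (Matrix.fromBlocks_inj.mp hpow).2.2.2
  · rw [← hb, Matrix.coe_toEuclideanCLM_eq_toEuclideanLin]
    exact unitSim_toMatrix A b

theorem stmt13 (n k : ℕ) (hk : 1 ≤ k) (A : Matrix (Fin n) (Fin n) ℂ)
    (h1 : opNorm A = 1) (h2 : opNorm (A ^ k) = 1) (h3 : A ^ (k + 1) = 0) :
    ∃ B : Matrix (Fin (n - (k + 1))) (Fin (n - (k + 1))) ℂ, B ^ (k + 1) = 0 ∧
      UnitSim A (Matrix.fromBlocks (Jordan (k + 1)) 0 0 B) :=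
  stmt13_general n k A h1 h2 h3
end

section
/- Let A be an n-by-n nonnegative matrix. Then sup{k ≥ 1 : A^k ≠ 0} = ∞ if and only if there exists k ≥ 1 such that some diagonal entry of A^k is nonzero. -/
/-!
A positive entry of `A ^ k` is the same as a walk of length `k` along positive entries of `A`.
A walk longer than `n` revisits a vertex and so contains a closed walk, which gives a positive
diagonal entry of some power; conversely, going around a closed walk `m` times shows that
`A ^ (k * m) ≠ 0` for every `m`.
-/

namespace Quiver.Path

variable {V : Type*} [Quiver V]

theorem exists_cycle_of_not_nodup_vertices {a b : V} (p : Path a b) (h : ¬p.vertices.Nodup) :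
    ∃ (v : V) (c : Path v v), 0 < c.length := by
  induction p with
  | nil => simp at h
  | @cons u w p e ih =>
    rw [vertices_cons, List.nodup_concat, not_and_or, not_not] at h
    rcases h with hw | hp
    · obtain ⟨-, q, -⟩ := p.exists_eq_comp_of_mem_vertices hw
      exact ⟨w, q.cons e, by simp⟩
    · exact ih hp

theorem exists_cycle_of_card_le_length [Fintype V] {a b : V} (p : Path a b)
    (h : Fintype.card V ≤ p.length) : ∃ (v : V) (c : Path v v), 0 < c.length :=
  p.exists_cycle_of_not_nodup_vertices fun hp => by
    have := hp.length_le_card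
    simp only [vertices_length] at this
    omega

end Quiver.Path

namespace Matrix

variable {n R : Type*} [Fintype n] [DecidableEq n] [Ring R] [LinearOrder R] [IsStrictOrderedRing R]
  {A : Matrix n n R}

theorem exists_pow_apply_self_pos_of_pow_ne_zero (hA : ∀ i j, 0 ≤ A i j) {k : ℕ}
    (hk : Fintype.card n ≤ k) (h : A ^ k ≠ 0) : ∃ m i, 0 < m ∧ 0 < (A ^ m) i i := by
  let := toQuiver A
  obtain ⟨i, j, hij⟩ : ∃ i j, (A ^ k) i j ≠ 0 := by
    by_contra! h0
    exact h (ext h0)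
  obtain ⟨⟨p, rfl⟩⟩ := (pow_apply_pos_iff_nonempty_path hA k i j).mp
    ((pow_apply_nonneg hA k i j).lt_of_ne' hij)
  obtain ⟨v, c, hc⟩ := p.exists_cycle_of_card_le_length hk
  exact ⟨c.length, v, hc, (pow_apply_pos_iff_nonempty_path hA _ v v).mpr ⟨c, rfl⟩⟩

theorem pow_mul_apply_self_pos (hA : ∀ i j, 0 ≤ A i j) {k : ℕ} {i : n}
    (h : 0 < (A ^ k) i i) (m : ℕ) : 0 < (A ^ (k * m)) i i := by
  let := toQuiver A
  obtain ⟨⟨c, hc⟩⟩ := (pow_apply_pos_iff_nonempty_path hA k i i).mp h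
  refine (pow_apply_pos_iff_nonempty_path hA _ i i).mpr ?_
  induction m with
  | zero => exact ⟨.nil, rfl⟩
  | succ m ih =>
    obtain ⟨⟨p, hp⟩⟩ := ih
    exact ⟨⟨p.comp c, by rw [Quiver.Path.length_comp, hp, hc, Nat.mul_succ]⟩⟩

end Matrix

theorem ENat.sSup_natCast_image_eq_top_iff {s : Set ℕ} :
    sSup (((↑) : ℕ → ℕ∞) '' s) = ⊤ ↔ s.Infinite := by
  rw [sSup_image', iSup_natCast_eq_top, Subtype.range_coe, Set.Infinite, Set.finite_iff_bddAbove]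

theorem stmt16 (n : ℕ) (A : Matrix (Fin n) (Fin n) ℝ) (hA : ∀ i j, 0 ≤ A i j) :
    sSup {c : ℕ∞ | ∃ k : ℕ, 1 ≤ k ∧ A ^ k ≠ 0 ∧ c = k} = ⊤ ↔
      ∃ (k : ℕ) (i : Fin n), 1 ≤ k ∧ (A ^ k) i i ≠ 0 := by
  have hS : {c : ℕ∞ | ∃ k : ℕ, 1 ≤ k ∧ A ^ k ≠ 0 ∧ c = k} =
      (↑) '' {k : ℕ | 1 ≤ k ∧ A ^ k ≠ 0} := by
    ext c
    simp [eq_comm, and_assoc]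
  rw [hS, ENat.sSup_natCast_image_eq_top_iff, Set.infinite_iff_exists_gt]
  constructor
  · intro h
    obtain ⟨k, ⟨-, hk⟩, hnk⟩ := h n
    obtain ⟨m, i, hm, hpos⟩ :=
      Matrix.exists_pow_apply_self_pos_of_pow_ne_zero hA (by simpa using hnk.le) hk
    exact ⟨m, i, hm, hpos.ne'⟩
  · rintro ⟨k, i, hk, hne⟩ N
    have hpos := (Matrix.pow_apply_nonneg hA k i i).lt_of_ne' hne
    refine ⟨k * (N + 1), ⟨Nat.mul_pos hk N.succ_pos, fun h0 => ?_⟩, by nlinarith⟩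
    simpa [h0] using Matrix.pow_mul_apply_self_pos hA hpos (N + 1)
end
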